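/- arXiv:1606.08082 — 3 statements merged into one kernel-verified Lean document; each statement's English description precedes it below -/
import Mathlib

section
/- Let 0 < s < ∞, Q/(Q+s) < p ≤ ∞ and 0 < q ≤ ∞. The operator T defined on sequences u: X → ℂ by Tu(x) = Σ_{|y| ≥ |x|, B(y)∩B(x)≠∅} (μ(B(y))/μ(B(x))) u(y) is well-defined and bounded on I^s_{p,q}(X). -/
open MeasureTheory Metric Filter ENNReal NNReal

noncomputable section

/-- ℓ^p-type sum with weights, with the obvious modification (sup) when `p = ∞`. -/
def sumPartG {ι : Type*} (p : ℝ≥0∞) (w : ι → ℝ≥0∞) (f : ι → ℝ≥0∞) : ℝ≥0∞ :=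
  if p = ∞ then ⨆ i, f i else (∑' i, w i * f i ^ p.toReal) ^ (1 / p.toReal)

/-- The ball associated to a vertex `x` of the hyperbolic filling. -/
def vBall {Z X : Type*} [MetricSpace Z] (ξ : X → Z) (lvl : X → ℤ) (x : X) : Set Z :=
  Metric.ball (ξ x) ((2:ℝ) ^ (-(lvl x)))

/-- The sequence-space quasinorm of `I^s_{p,q}(X)`, for `g : X → ℝ≥0∞`. -/
def seqNorm {Z X : Type*} [MetricSpace Z] [MeasurableSpace Z] (μ : Measure Z)
    (ξ : X → Z) (lvl : X → ℤ) (s : ℝ) (p q : ℝ≥0∞) (g : X → ℝ≥0∞) : ℝ≥0∞ :=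
  sumPartG q (fun _ : ℤ => 1)
    (fun k => (2 : ℝ≥0∞) ^ ((k : ℝ) * s) *
      sumPartG p (fun x : {x : X // lvl x = k} => μ (vBall ξ lvl x.1)) (fun x => g x.1))

/-- The edge relation of the hyperbolic filling graph. -/
def edgeRel {Z X : Type*} [MetricSpace Z] (ξ : X → Z) (lvl : X → ℤ) (x y : X) : Prop :=
  x ≠ y ∧ |lvl x - lvl y| ≤ 1 ∧ (vBall ξ lvl x ∩ vBall ξ lvl y).Nonempty

/-- The magnitude `|du|` of the discrete derivative of `u : X → ℂ`. -/
def eDu {Z X : Type*} [MetricSpace Z] (ξ : X → Z) (lvl : X → ℤ) (u : X → ℂ) (x : X) : ℝ≥0∞ :=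
  (∑' y : {y : X // edgeRel ξ lvl x y}, (‖u y.1 - u x‖₊ : ℝ≥0∞) ^ (2:ℝ)) ^ ((1:ℝ)/2)

/-- The Poisson extension of `f`. -/
def poisson {Z X : Type*} [MetricSpace Z] [MeasurableSpace Z] (μ : Measure Z)
    (ξ : X → Z) (lvl : X → ℤ) (f : Z → ℂ) (x : X) : ℂ :=
  ⨍ z in vBall ξ lvl x, f z ∂μ

/-- The discrete convolution `T_n u = ∑_{|x| = n} u(x) ψ_x`. -/
def discConv {Z X : Type*} (lvl : X → ℤ) (ψ : X → Z → ℝ) (u : X → ℂ) (n : ℤ) (z : Z) : ℂ :=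
  ∑' x : {x : X // lvl x = n}, (ψ x.1 z : ℂ) * u x.1

/-!
Split `T = ∑ⱼ Tⱼ`, where `Tⱼ` only sees the vertices `j` levels below `x`. Doubling and the
separation of each level give three geometric facts: the balls in the sum defining `Tⱼ g(x)` have
bounded overlap inside `3 B(x)`; a ball meets boundedly many balls of any given higher level;
and `μ B(x) ≲ 2^{jQ} μ B(y)` for `y` in the `j`-th layer. For the level sums
`Aₖ(g) = ∑_{|x| = k} μ B(x) g(x)^p` they yield `Aₖ(Tⱼ g) ≲ A_{k+j}(g)` when `p ≥ 1` (Hölder) and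
`Aₖ(Tⱼ g) ≲ 2^{jQ(1-p)} A_{k+j}(g)` when `p ≤ 1` (the `p`-triangle inequality). After the weights
`2^{ksp}` are put in, `2^{ksp} Aₖ(T g) ≲ ∑ⱼ tʲ 2^{(k+j)sp} A_{k+j}(g)` with `t < 1` (for `p ≤ 1`
this is exactly `p > Q/(Q+s)`), and Young's inequality for this geometric kernel on `ℓ^{q/p}(ℤ)`
bounds the quasinorm. For `p = ∞` the same argument runs with suprema.
-/

namespace ENNReal

theorem iSup_rpow {ι : Sort*} (f : ι → ℝ≥0∞) {r : ℝ} (hr : 0 < r) :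
    (⨆ i, f i) ^ r = ⨆ i, f i ^ r :=
  Monotone.map_iSup_of_continuousAt (f := fun x : ℝ≥0∞ => x ^ r)
    ENNReal.continuous_rpow_const.continuousAt (monotone_rpow_of_nonneg hr.le)
    (zero_rpow_of_pos hr)

theorem rpow_sum_le_sum_rpow {ι : Type*} (s : Finset ι) (f : ι → ℝ≥0∞) {r : ℝ} (hr0 : 0 < r)
    (hr1 : r ≤ 1) : (∑ i ∈ s, f i) ^ r ≤ ∑ i ∈ s, f i ^ r := by
  classical
  induction s using Finset.cons_induction with
  | empty => simp [zero_rpow_of_pos hr0]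
  | cons a s ha ih =>
    rw [Finset.sum_cons, Finset.sum_cons]
    exact (rpow_add_le_add_rpow _ _ hr0.le hr1).trans (add_le_add le_rfl ih)

theorem rpow_tsum_le_tsum_rpow {ι : Type*} (f : ι → ℝ≥0∞) {r : ℝ} (hr0 : 0 < r) (hr1 : r ≤ 1) :
    (∑' i, f i) ^ r ≤ ∑' i, f i ^ r := by
  rw [ENNReal.tsum_eq_iSup_sum, iSup_rpow _ hr0]
  exact iSup_le fun s => (rpow_sum_le_sum_rpow s f hr0 hr1).trans (ENNReal.sum_le_tsum s)

/-- Hölder's inequality for the splitting `w * f = w ^ (1 - 1/P) * (w ^ (1/P) * f)`. -/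
theorem rpow_tsum_mul_le {ι : Type*} (w f : ι → ℝ≥0∞) {P : ℝ} (hP : 1 ≤ P) :
    (∑' i, w i * f i) ^ P ≤ (∑' i, w i) ^ (P - 1) * ∑' i, w i * f i ^ P := by
  obtain rfl | hP := hP.eq_or_lt
  · simp
  let _ : MeasurableSpace ι := ⊤
  have hP0 : 0 < P := by linarith
  have ha : 0 < 1 - P⁻¹ := sub_pos.2 (inv_lt_one_of_one_lt₀ hP)
  have hconj : (1 - P⁻¹)⁻¹.HolderConjugate P⁻¹⁻¹ :=
    .one_sub_inv_inv (inv_pos.2 hP0) (inv_lt_one_of_one_lt₀ hP)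
  have holder := lintegral_mul_le_Lp_mul_Lq Measure.count hconj
    (f := fun i => w i ^ (1 - P⁻¹)) (g := fun i => w i ^ P⁻¹ * f i)
    measurable_from_top.aemeasurable measurable_from_top.aemeasurable
  have hw : ∀ i, w i ^ (1 - P⁻¹) * (w i ^ P⁻¹ * f i) = w i * f i := fun i => by
    rw [← mul_assoc, ← rpow_add_of_nonneg _ _ ha.le (inv_pos.2 hP0).le]
    simp
  simp only [lintegral_count, Pi.mul_apply, hw, inv_inv, one_div, ← rpow_mul,
    mul_inv_cancel₀ ha.ne', rpow_one, mul_rpow_of_nonneg _ _ hP0.le,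
    inv_mul_cancel₀ hP0.ne'] at holder
  calc (∑' i, w i * f i) ^ P
      ≤ ((∑' i, w i) ^ (1 - P⁻¹) * (∑' i, w i * f i ^ P) ^ P⁻¹) ^ P := by gcongr
    _ = (∑' i, w i) ^ (P - 1) * ∑' i, w i * f i ^ P := by
      rw [mul_rpow_of_nonneg _ _ hP0.le, ← rpow_mul, ← rpow_mul, inv_mul_cancel₀ hP0.ne',
        rpow_one, sub_mul, one_mul, inv_mul_cancel₀ hP0.ne']

theorem pow_rpow_comm (x : ℝ≥0∞) (n : ℕ) (y : ℝ) : (x ^ n) ^ y = (x ^ y) ^ n := by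
  rw [← rpow_natCast_mul, mul_comm, rpow_mul_natCast]

theorem tsum_geometric_rpow_ne_top {c t : ℝ≥0∞} (hc : c ≠ ∞) (ht : t < 1) {R : ℝ} (hR : 0 < R) :
    ∑' j : ℕ, (c * t ^ j) ^ R ≠ ∞ := by
  have htR : t ^ R < 1 := rpow_lt_one ht hR
  simp only [mul_rpow_of_nonneg _ _ hR.le, pow_rpow_comm, ENNReal.tsum_mul_left,
    ENNReal.tsum_geometric]
  exact mul_ne_top (rpow_ne_top_of_nonneg hR.le hc) (inv_ne_top.2 (tsub_pos_of_lt htR).ne')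

theorem two_rpow_intCast_mul_eq (a : ℝ) (k : ℤ) (j : ℕ) :
    (2:ℝ≥0∞) ^ ((k:ℝ) * a) = (2 ^ (-a)) ^ j * 2 ^ (((k + j : ℤ) : ℝ) * a) := by
  rw [← ENNReal.rpow_mul_natCast, ← ENNReal.rpow_add _ _ two_ne_zero ofNat_ne_top]
  congr 1
  push_cast
  ring

end ENNReal

section ShiftConvolution

variable {a : ℕ → ℝ≥0∞} {V W : ℤ → ℝ≥0∞}

theorem tsum_shift_rpow (W : ℤ → ℝ≥0∞) (j : ℕ) (R : ℝ) :
    ∑' k : ℤ, W (k + j) ^ R = ∑' k : ℤ, W k ^ R :=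
  (Equiv.addRight (j : ℤ)).tsum_eq fun k => W k ^ R

theorem iSup_le_of_le_tsum_shift (hV : ∀ k, V k ≤ ∑' j : ℕ, a j * W (k + j)) :
    ⨆ k, V k ≤ (∑' j, a j) * ⨆ k, W k := by
  refine iSup_le fun k => (hV k).trans ?_
  rw [← ENNReal.tsum_mul_right]
  exact ENNReal.tsum_le_tsum fun j => mul_le_mul_right (le_iSup W _) _

theorem tsum_rpow_le_of_le_tsum_shift_of_le_one {R : ℝ} (hR0 : 0 < R) (hR1 : R ≤ 1)
    (hV : ∀ k, V k ≤ ∑' j : ℕ, a j * W (k + j)) :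
    ∑' k, V k ^ R ≤ (∑' j, a j ^ R) * ∑' k, W k ^ R :=
  calc ∑' k, V k ^ R
      ≤ ∑' k : ℤ, ∑' j : ℕ, a j ^ R * W (k + j) ^ R := by
        refine ENNReal.tsum_le_tsum fun k => ((rpow_le_rpow (hV k) hR0.le).trans
          (ENNReal.rpow_tsum_le_tsum_rpow _ hR0 hR1)).trans_eq ?_
        simp only [mul_rpow_of_nonneg _ _ hR0.le]
    _ = (∑' j, a j ^ R) * ∑' k, W k ^ R := by
        rw [ENNReal.tsum_comm, ← ENNReal.tsum_mul_right]
        simp only [ENNReal.tsum_mul_left, tsum_shift_rpow]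

theorem tsum_rpow_le_of_le_tsum_shift_of_one_le {R : ℝ} (hR : 1 ≤ R)
    (hV : ∀ k, V k ≤ ∑' j : ℕ, a j * W (k + j)) :
    ∑' k, V k ^ R ≤ (∑' j, a j) ^ R * ∑' k, W k ^ R :=
  calc ∑' k, V k ^ R
      ≤ ∑' k : ℤ, (∑' j, a j) ^ (R - 1) * ∑' j : ℕ, a j * W (k + j) ^ R :=
        ENNReal.tsum_le_tsum fun k => (rpow_le_rpow (hV k) (by linarith)).trans
          (ENNReal.rpow_tsum_mul_le _ _ hR)
    _ = (∑' j, a j) ^ (R - 1) * (∑' j, a j) * ∑' k, W k ^ R := by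
        rw [ENNReal.tsum_mul_left, ENNReal.tsum_comm, mul_assoc, ← ENNReal.tsum_mul_right]
        simp only [ENNReal.tsum_mul_left, tsum_shift_rpow]
    _ = (∑' j, a j) ^ R * ∑' k, W k ^ R := by
        conv_lhs => enter [1, 2]; rw [← rpow_one (∑' j, a j)]
        rw [← rpow_add_of_nonneg _ _ (by linarith) zero_le_one, sub_add_cancel]

end ShiftConvolution

theorem sumPartG_mono {ι : Type*} (r : ℝ≥0∞) (w : ι → ℝ≥0∞) {f g : ι → ℝ≥0∞}
    (h : ∀ i, f i ≤ g i) : sumPartG r w f ≤ sumPartG r w g := by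
  unfold sumPartG
  split_ifs
  · exact iSup_mono h
  · gcongr with i
    exact h i

theorem le_sumPartG_const_one {ι : Type*} {r : ℝ≥0∞} (hr0 : r ≠ 0) (f : ι → ℝ≥0∞) (i : ι) :
    f i ≤ sumPartG r (fun _ => 1) f := by
  unfold sumPartG
  split_ifs with hr
  · exact le_iSup f i
  have hR : 0 < r.toReal := toReal_pos hr0 hr
  calc f i = (f i ^ r.toReal) ^ (1 / r.toReal) := by
        rw [← ENNReal.rpow_mul, mul_one_div_cancel hR.ne', ENNReal.rpow_one]
    _ ≤ _ := by
        gcongr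
        simpa using ENNReal.le_tsum (f := fun i => 1 * f i ^ r.toReal) i

theorem sumPartG_eq_top {ι : Type*} {r : ℝ≥0∞} (hr0 : r ≠ 0) {w f : ι → ℝ≥0∞} {i : ι}
    (hw : w i ≠ 0) (hf : f i = ∞) : sumPartG r w f = ∞ := by
  unfold sumPartG
  split_ifs with hr
  · exact top_le_iff.1 (hf ▸ le_iSup f i)
  have hR : 0 < r.toReal := toReal_pos hr0 hr
  have : ∑' i, w i * f i ^ r.toReal = ∞ := top_le_iff.1 <| by
    simpa [hf, top_rpow_of_pos hR, mul_top hw] using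
      ENNReal.le_tsum (f := fun i => w i * f i ^ r.toReal) i
  rw [this, top_rpow_of_pos (by positivity)]

theorem sumPartG_const_one_rpow {ι : Type*} {p q : ℝ≥0∞} (hp0 : p ≠ 0) (hp : p ≠ ∞) (hq0 : q ≠ 0)
    (V : ι → ℝ≥0∞) :
    sumPartG q (fun _ => 1) (fun i => V i ^ (1 / p.toReal)) =
      sumPartG (q / p) (fun _ => 1) V ^ (1 / p.toReal) := by
  have hP : 0 < p.toReal := toReal_pos hp0 hp
  by_cases hq : q = ∞
  · have hqp : q / p = ∞ := by rw [hq, top_div, if_neg hp]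
    simp only [sumPartG, if_pos hq, if_pos hqp, ENNReal.iSup_rpow _ (one_div_pos.2 hP)]
  have hQ : 0 < q.toReal := toReal_pos hq0 hq
  have hqp : q / p ≠ ∞ := div_ne_top hq hp0
  simp only [sumPartG, if_neg hq, if_neg hqp, one_mul, toReal_div, ← ENNReal.rpow_mul]
  congr 1
  · exact tsum_congr fun i => by congr 1; field_simp
  · field_simp

theorem sumPartG_const_one_le_of_tsum_rpow_le {r : ℝ≥0∞} (hr0 : r ≠ 0) (hr : r ≠ ∞)
    {V W : ℤ → ℝ≥0∞} {K : ℝ≥0∞}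
    (h : ∑' k, V k ^ r.toReal ≤ K ^ r.toReal * ∑' k, W k ^ r.toReal) :
    sumPartG r (fun _ => 1) V ≤ K * sumPartG r (fun _ => 1) W := by
  have hR : 0 < r.toReal := toReal_pos hr0 hr
  simp only [sumPartG, if_neg hr, one_mul]
  calc (∑' k, V k ^ r.toReal) ^ (1 / r.toReal)
      ≤ (K ^ r.toReal * ∑' k, W k ^ r.toReal) ^ (1 / r.toReal) := by gcongr
    _ = K * (∑' k, W k ^ r.toReal) ^ (1 / r.toReal) := by
      rw [mul_rpow_of_nonneg _ _ (by positivity), ← ENNReal.rpow_mul,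
        mul_one_div_cancel hR.ne', ENNReal.rpow_one]

/-- Young's inequality on `ℓ^r(ℤ)` for a one-sided geometrically decaying kernel. -/
theorem exists_sumPartG_le_of_le_tsum_shift {r : ℝ≥0∞} (hr0 : r ≠ 0) {c t : ℝ≥0∞}
    (hc : c ≠ ∞) (ht : t < 1) :
    ∃ K : ℝ≥0∞, K ≠ ∞ ∧ ∀ V W : ℤ → ℝ≥0∞,
      (∀ k, V k ≤ ∑' j : ℕ, c * t ^ j * W (k + j)) →
      sumPartG r (fun _ => 1) V ≤ K * sumPartG r (fun _ => 1) W := by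
  have hG : ∑' j : ℕ, c * t ^ j ≠ ∞ := by
    simpa using ENNReal.tsum_geometric_rpow_ne_top hc ht one_pos
  by_cases hr : r = ∞
  · refine ⟨_, hG, fun V W hV => ?_⟩
    simpa only [sumPartG, if_pos hr] using iSup_le_of_le_tsum_shift hV
  have hR : 0 < r.toReal := toReal_pos hr0 hr
  rcases le_total r.toReal 1 with hR1 | hR1
  · refine ⟨(∑' j : ℕ, (c * t ^ j) ^ r.toReal) ^ (1 / r.toReal),
      rpow_ne_top_of_nonneg (by positivity) (ENNReal.tsum_geometric_rpow_ne_top hc ht hR),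
      fun V W hV => sumPartG_const_one_le_of_tsum_rpow_le hr0 hr ?_⟩
    rw [← ENNReal.rpow_mul, one_div_mul_cancel hR.ne', ENNReal.rpow_one]
    exact tsum_rpow_le_of_le_tsum_shift_of_le_one hR hR1 hV
  · exact ⟨_, hG, fun V W hV => sumPartG_const_one_le_of_tsum_rpow_le hr0 hr
      (tsum_rpow_le_of_le_tsum_shift_of_one_le hR1 hV)⟩

structure IsDoubling {Z : Type*} [MetricSpace Z] [MeasurableSpace Z] (μ : Measure Z) (C Q : ℝ) :
    Prop where
  measure_ball_le : ∀ (ζ : Z) (r lam : ℝ), 0 < r → 1 ≤ lam →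
    μ (ball ζ (lam * r)) ≤ ENNReal.ofReal (C * lam ^ Q) * μ (ball ζ r)
  measure_ball_pos : ∀ (ζ : Z) (r : ℝ), 0 < r → 0 < μ (ball ζ r)
  measure_ball_lt_top : ∀ (ζ : Z) (r : ℝ), μ (ball ζ r) < ∞

namespace IsDoubling

variable {Z : Type*} [MetricSpace Z] [MeasurableSpace Z] {μ : Measure Z} {C Q : ℝ}

theorem measure_ball_le_of_add_dist_le (hμ : IsDoubling μ C Q) {ζ ζ' : Z} {r r' lam : ℝ}
    (hr : 0 < r) (hlam : 1 ≤ lam) (h : r' + dist ζ' ζ ≤ lam * r) :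
    μ (ball ζ' r') ≤ ENNReal.ofReal (C * lam ^ Q) * μ (ball ζ r) :=
  (measure_mono (ball_subset_ball' h)).trans (hμ.measure_ball_le ζ r lam hr hlam)

/-- The disjoint balls of radius `δ / 2` around the points lie in `ball z (Λ δ + δ)`, and each of
them carries a fixed proportion of its measure. -/
theorem tsum_one_le_of_separated [OpensMeasurableSpace Z] (hμ : IsDoubling μ C Q) {ι : Type*}
    (a : ι → Z) (z : Z) {δ Λ : ℝ} (hδ : 0 < δ) (hΛ : 0 ≤ Λ)
    (hsep : Pairwise fun i j => δ ≤ dist (a i) (a j)) (hz : ∀ i, dist (a i) z < Λ * δ) :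
    ∑' _ : ι, (1 : ℝ≥0∞) ≤ ENNReal.ofReal (C * (4 * Λ + 2) ^ Q) := by
  set K := ENNReal.ofReal (C * (4 * Λ + 2) ^ Q)
  set B := ball z (Λ * δ + δ)
  have hB_le : ∀ i, μ B ≤ K * μ (ball (a i) (δ / 2)) := fun i =>
    hμ.measure_ball_le_of_add_dist_le (by positivity) (by linarith) (by
      rw [dist_comm]; nlinarith [hz i])
  have hdisj : ∑' i, μ (ball (a i) (δ / 2)) ≤ μ B := by
    refine (tsum_meas_le_meas_iUnion_of_disjoint μ (fun _ => measurableSet_ball)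
      fun i j hij => ball_disjoint_ball (by linarith [hsep hij])).trans (measure_mono ?_)
    refine Set.iUnion_subset fun i => ball_subset_ball' ?_
    linarith [hz i]
  have hB_pos := hμ.measure_ball_pos z (Λ * δ + δ) (by positivity)
  refine (ENNReal.mul_le_mul_iff_left hB_pos.ne' (hμ.measure_ball_lt_top _ _).ne).1 ?_
  calc (∑' _ : ι, 1) * μ B = ∑' _ : ι, μ B := by rw [← ENNReal.tsum_mul_right, one_mul]
    _ ≤ ∑' i, K * μ (ball (a i) (δ / 2)) := ENNReal.tsum_le_tsum hB_le
    _ ≤ K * μ B := by rw [ENNReal.tsum_mul_left]; exact mul_le_mul_right hdisj K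

end IsDoubling

section Filling

variable {Z X : Type*} [MetricSpace Z] {ξ : X → Z} {lvl : X → ℤ}

def LevelSeparated (ξ : X → Z) (lvl : X → ℤ) : Prop :=
  ∀ x y : X, x ≠ y → lvl x = lvl y → (2:ℝ) ^ (-lvl x - 1) ≤ dist (ξ x) (ξ y)

def layer (ξ : X → Z) (lvl : X → ℤ) (x : X) (j : ℕ) : Set X :=
  {y | lvl y = lvl x + j ∧ (vBall ξ lvl y ∩ vBall ξ lvl x).Nonempty}

theorem dist_lt_of_vBall_inter_nonempty {x y : X}
    (h : (vBall ξ lvl y ∩ vBall ξ lvl x).Nonempty) :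
    dist (ξ x) (ξ y) < (2:ℝ) ^ (-lvl x) + (2:ℝ) ^ (-lvl y) := by
  obtain ⟨w, hwy, hwx⟩ := h
  rw [vBall, mem_ball] at hwx hwy
  linarith [dist_triangle_left (ξ x) (ξ y) w]

theorem two_zpow_neg_le {m n : ℤ} (h : m ≤ n) : (2:ℝ) ^ (-n) ≤ (2:ℝ) ^ (-m) :=
  zpow_le_zpow_right₀ one_le_two (neg_le_neg h)

theorem tsum_level_tsum_layer (k : ℤ) (j : ℕ) (F : X → X → ℝ≥0∞) :
    ∑' x : {x : X // lvl x = k}, ∑' y : layer ξ lvl x j, F x y =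
      ∑' y : {y : X // lvl y = k + j},
        ∑' x : {x : X // lvl x = k ∧ (vBall ξ lvl y ∩ vBall ξ lvl x).Nonempty}, F x y := by
  let e : (Σ x : {x : X // lvl x = k}, layer ξ lvl x j) ≃
      Σ y : {y : X // lvl y = k + j},
        {x : X // lvl x = k ∧ (vBall ξ lvl y ∩ vBall ξ lvl x).Nonempty} :=
    { toFun := fun p => ⟨⟨p.2, by grind [layer]⟩, p.1, p.1.2, p.2.2.2⟩
      invFun := fun p => ⟨⟨p.2, p.2.2.1⟩, p.1, by grind [layer], p.2.2.2⟩
      left_inv := fun _ => rfl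
      right_inv := fun _ => rfl }
  exact (ENNReal.tsum_sigma' fun p : Σ x : {x : X // lvl x = k}, layer ξ lvl x j =>
    F p.1 p.2).symm.trans ((e.tsum_eq fun p => F p.2 p.1).trans (ENNReal.tsum_sigma' _))

variable [MeasurableSpace Z] {μ : Measure Z} {C Q : ℝ}

namespace IsDoubling

theorem measure_vBall_pos (hμ : IsDoubling μ C Q) (x : X) : 0 < μ (vBall ξ lvl x) :=
  hμ.measure_ball_pos _ _ (zpow_pos two_pos _)

theorem measure_vBall_lt_top (hμ : IsDoubling μ C Q) (x : X) : μ (vBall ξ lvl x) < ∞ :=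
  hμ.measure_ball_lt_top _ _

theorem measure_vBall_le_of_mem_layer (hμ : IsDoubling μ C Q) {x y : X} {j : ℕ}
    (hy : y ∈ layer ξ lvl x j) :
    μ (vBall ξ lvl x) ≤ ENNReal.ofReal (C * 4 ^ Q) * 2 ^ (Q * j) * μ (vBall ξ lvl y) := by
  have h2j : (2:ℝ) ^ (-lvl x) = 2 ^ j * 2 ^ (-lvl y) := by
    rw [hy.1, ← zpow_natCast, ← zpow_add₀ two_ne_zero]
    ring_nf
  have hle := hμ.measure_ball_le_of_add_dist_le (ζ := ξ y) (ζ' := ξ x) (r' := 2 ^ (-lvl x))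
    (lam := 4 * 2 ^ j) (zpow_pos two_pos (-lvl y))
    (by nlinarith [one_le_pow₀ (M₀ := ℝ) (n := j) one_le_two]) (by
      rw [mul_assoc, ← h2j]
      have := two_zpow_neg_le (show lvl x ≤ lvl y by grind [layer])
      linarith [dist_lt_of_vBall_inter_nonempty hy.2, zpow_pos (two_pos (α := ℝ)) (-lvl x)])
  refine hle.trans_eq ?_
  congr 1
  rw [Real.mul_rpow (by norm_num) (by positivity), ← mul_assoc, ENNReal.ofReal_mul' (by positivity),
    ← Real.rpow_natCast, ← Real.rpow_mul zero_le_two, ← ENNReal.ofReal_rpow_of_pos two_pos]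
  norm_num [mul_comm]

variable [OpensMeasurableSpace Z]

/-- The balls `B(y)`, `y ∈ layer ξ lvl x j`, contain disjoint balls of a quarter of their radius,
which lie in `3 B(x)`. -/
theorem tsum_measure_layer_le (hμ : IsDoubling μ C Q) (hsep : LevelSeparated ξ lvl) (x : X)
    (j : ℕ) :
    ∑' y : layer ξ lvl x j, μ (vBall ξ lvl y) ≤
      ENNReal.ofReal (C * 4 ^ Q) * ENNReal.ofReal (C * 3 ^ Q) * μ (vBall ξ lvl x) := by
  set small : layer ξ lvl x j → Set Z := fun y => ball (ξ y) (2 ^ (-lvl y.1 - 2))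
  have hsmall : ∀ y : layer ξ lvl x j,
      μ (vBall ξ lvl y) ≤ ENNReal.ofReal (C * 4 ^ Q) * μ (small y) := fun y =>
    hμ.measure_ball_le_of_add_dist_le (zpow_pos two_pos _) (by norm_num) (by
      rw [dist_self, add_zero, zpow_sub₀ two_ne_zero]
      norm_num [mul_div_cancel₀])
  have hdisj : Pairwise (Function.onFun Disjoint small) := by
    intro y y' hne
    have hlvl : lvl y = lvl y' := y.2.1.trans y'.2.1.symm
    have := hsep y y' (fun h => hne (Subtype.ext h)) hlvl
    refine ball_disjoint_ball ?_
    rw [← hlvl]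
    simp only [zpow_sub₀ (two_ne_zero (α := ℝ))] at this ⊢
    linarith
  have hunion : (⋃ y, small y) ⊆ ball (ξ x) (3 * 2 ^ (-lvl x)) := by
    refine Set.iUnion_subset fun y => ball_subset_ball' ?_
    have h1 := two_zpow_neg_le (show lvl x ≤ lvl y by grind [layer])
    have h2 := zpow_le_zpow_right₀ (one_le_two (α := ℝ)) (show -lvl y.1 - 2 ≤ -lvl y.1 by omega)
    rw [dist_comm]
    linarith [dist_lt_of_vBall_inter_nonempty y.2.2, zpow_pos (two_pos (α := ℝ)) (-lvl y.1 - 2)]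
  calc ∑' y : layer ξ lvl x j, μ (vBall ξ lvl y)
      ≤ ∑' y, ENNReal.ofReal (C * 4 ^ Q) * μ (small y) := ENNReal.tsum_le_tsum hsmall
    _ ≤ ENNReal.ofReal (C * 4 ^ Q) * μ (ball (ξ x) (3 * 2 ^ (-lvl x))) := by
      rw [ENNReal.tsum_mul_left]
      exact mul_le_mul_right ((tsum_meas_le_meas_iUnion_of_disjoint μ
        (fun _ => measurableSet_ball) hdisj).trans (measure_mono hunion)) _
    _ ≤ ENNReal.ofReal (C * 4 ^ Q) * (ENNReal.ofReal (C * 3 ^ Q) * μ (vBall ξ lvl x)) :=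
      mul_le_mul_right (hμ.measure_ball_le_of_add_dist_le (zpow_pos two_pos _) (by norm_num)
        (by rw [dist_self, add_zero])) _
    _ = _ := (mul_assoc _ _ _).symm

/-- The centres of these balls are `2 ^ (-k - 1)`-separated and lie within `4 ⬝ 2 ^ (-k - 1)` of
`ξ y`. -/
theorem tsum_one_le_of_level_le (hμ : IsDoubling μ C Q) (hsep : LevelSeparated ξ lvl) {k : ℤ}
    {y : X} (hk : k ≤ lvl y) :
    ∑' _ : {x : X // lvl x = k ∧ (vBall ξ lvl y ∩ vBall ξ lvl x).Nonempty}, (1 : ℝ≥0∞) ≤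
      ENNReal.ofReal (C * 18 ^ Q) := by
  refine (hμ.tsum_one_le_of_separated (fun x : {x : X // lvl x = k ∧
      (vBall ξ lvl y ∩ vBall ξ lvl x).Nonempty} => ξ x) (ξ y) (δ := 2 ^ (-k - 1)) (Λ := 4)
    (zpow_pos two_pos _) (by norm_num) (fun x x' hne => by
      simpa [x.2.1] using hsep x x' (fun h => hne (Subtype.ext h)) (x.2.1.trans x'.2.1.symm))
    (fun x => by
      have h1 := dist_lt_of_vBall_inter_nonempty x.2.2
      have h2 := two_zpow_neg_le hk
      rw [x.2.1] at h1
      rw [zpow_sub₀ two_ne_zero]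
      linarith)).trans_eq ?_
  norm_num

end IsDoubling

end Filling

section Operator

variable {Z X : Type*} [MetricSpace Z] [MeasurableSpace Z] {μ : Measure Z} {ξ : X → Z}
  {lvl : X → ℤ}

def avgOp (μ : Measure Z) (ξ : X → Z) (lvl : X → ℤ) (g : X → ℝ≥0∞) (x : X) : ℝ≥0∞ :=
  ∑' y : {y : X // lvl x ≤ lvl y ∧ (vBall ξ lvl y ∩ vBall ξ lvl x).Nonempty},
    μ (vBall ξ lvl y) / μ (vBall ξ lvl x) * g y

def layerOp (μ : Measure Z) (ξ : X → Z) (lvl : X → ℤ) (j : ℕ) (g : X → ℝ≥0∞) (x : X) : ℝ≥0∞ :=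
  ∑' y : layer ξ lvl x j, μ (vBall ξ lvl y) / μ (vBall ξ lvl x) * g y

def levelSum (μ : Measure Z) (ξ : X → Z) (lvl : X → ℤ) (P : ℝ) (k : ℤ) (g : X → ℝ≥0∞) :
    ℝ≥0∞ :=
  ∑' x : {x : X // lvl x = k}, μ (vBall ξ lvl x) * g x ^ P

theorem avgOp_eq_tsum_layerOp (g : X → ℝ≥0∞) (x : X) :
    avgOp μ ξ lvl g x = ∑' j, layerOp μ ξ lvl j g x := by
  let e : {y : X // lvl x ≤ lvl y ∧ (vBall ξ lvl y ∩ vBall ξ lvl x).Nonempty} ≃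
      Σ j : ℕ, layer ξ lvl x j :=
    { toFun := fun y => ⟨(lvl y - lvl x).toNat, y, by grind, y.2.2⟩
      invFun := fun y => ⟨y.2, by grind [layer], y.2.2.2⟩
      left_inv := fun _ => rfl
      right_inv := by
        rintro ⟨j, y, hy, hyx⟩
        obtain rfl : (lvl y - lvl x).toNat = j := by omega
        rfl }
  rw [avgOp, ← e.symm.tsum_eq, ENNReal.tsum_sigma']
  rfl

end Operator

section LevelEstimates

variable {Z X : Type*} [MetricSpace Z] [MeasurableSpace Z] {μ : Measure Z} {C Q : ℝ}
  {ξ : X → Z} {lvl : X → ℤ}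

namespace IsDoubling

theorem measure_mul_layerOp_rpow_le_of_le_one (hμ : IsDoubling μ C Q) {P : ℝ} (hP0 : 0 < P)
    (hP1 : P ≤ 1) (j : ℕ) (g : X → ℝ≥0∞) (x : X) :
    μ (vBall ξ lvl x) * layerOp μ ξ lvl j g x ^ P ≤
      (ENNReal.ofReal (C * 4 ^ Q) * 2 ^ (Q * j)) ^ (1 - P) *
        ∑' y : layer ξ lvl x j, μ (vBall ξ lvl y) * g y ^ P := by
  set mx := μ (vBall ξ lvl x)
  have hterm : ∀ y : layer ξ lvl x j, mx * (μ (vBall ξ lvl y) / mx * g y) ^ P ≤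
      (ENNReal.ofReal (C * 4 ^ Q) * 2 ^ (Q * j)) ^ (1 - P) * (μ (vBall ξ lvl y) * g y ^ P) := by
    intro y
    set my := μ (vBall ξ lvl y)
    have hmy : my ^ (1 - P) * my ^ P = my := by
      rw [← rpow_add_of_nonneg _ _ (by linarith) hP0.le, sub_add_cancel, ENNReal.rpow_one]
    calc mx * (my / mx * g y) ^ P = mx ^ (1 - P) * my ^ P * g y ^ P := by
          rw [mul_rpow_of_nonneg _ _ hP0.le, div_rpow_of_nonneg _ _ hP0.le,
            ENNReal.rpow_sub _ _ (hμ.measure_vBall_pos x).ne' (hμ.measure_vBall_lt_top x).ne,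
            ENNReal.rpow_one, div_eq_mul_inv, div_eq_mul_inv]
          ring
      _ ≤ ((ENNReal.ofReal (C * 4 ^ Q) * 2 ^ (Q * j)) * my) ^ (1 - P) * my ^ P * g y ^ P := by
          gcongr
          exact hμ.measure_vBall_le_of_mem_layer y.2
      _ = _ := by
          rw [mul_rpow_of_nonneg _ _ (by linarith), mul_assoc _ (my ^ (1 - P)), hmy]
          ring
  calc mx * layerOp μ ξ lvl j g x ^ P
      ≤ mx * ∑' y : layer ξ lvl x j, (μ (vBall ξ lvl y) / mx * g y) ^ P :=
        mul_le_mul_right (ENNReal.rpow_tsum_le_tsum_rpow _ hP0 hP1) _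
    _ ≤ _ := by
        rw [← ENNReal.tsum_mul_left, ← ENNReal.tsum_mul_left]
        exact ENNReal.tsum_le_tsum hterm

variable [OpensMeasurableSpace Z]

theorem tsum_div_measure_layer_le (hμ : IsDoubling μ C Q) (hsep : LevelSeparated ξ lvl) (x : X)
    (j : ℕ) :
    ∑' y : layer ξ lvl x j, μ (vBall ξ lvl y) / μ (vBall ξ lvl x) ≤
      ENNReal.ofReal (C * 4 ^ Q) * ENNReal.ofReal (C * 3 ^ Q) := by
  simp only [div_eq_mul_inv, ENNReal.tsum_mul_right]
  rw [← div_eq_mul_inv, ENNReal.div_le_iff (hμ.measure_vBall_pos x).ne'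
    (hμ.measure_vBall_lt_top x).ne]
  exact hμ.tsum_measure_layer_le hsep x j

theorem levelSum_layerOp_le (hμ : IsDoubling μ C Q) (hsep : LevelSeparated ξ lvl) {P : ℝ}
    {c : ℝ≥0∞} {k : ℤ} {j : ℕ} {g : X → ℝ≥0∞}
    (hpt : ∀ x, μ (vBall ξ lvl x) * layerOp μ ξ lvl j g x ^ P ≤
      c * ∑' y : layer ξ lvl x j, μ (vBall ξ lvl y) * g y ^ P) :
    levelSum μ ξ lvl P k (layerOp μ ξ lvl j g) ≤
      c * ENNReal.ofReal (C * 18 ^ Q) * levelSum μ ξ lvl P (k + j) g := by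
  have hcount : ∀ y : {y : X // lvl y = k + j},
      ∑' _ : {x : X // lvl x = k ∧ (vBall ξ lvl y ∩ vBall ξ lvl x).Nonempty},
        μ (vBall ξ lvl y) * g y ^ P ≤
      ENNReal.ofReal (C * 18 ^ Q) * (μ (vBall ξ lvl y) * g y ^ P) := fun y => by
    calc ∑' _ : {x : X // lvl x = k ∧ (vBall ξ lvl y ∩ vBall ξ lvl x).Nonempty},
          μ (vBall ξ lvl y) * g y ^ P
        = (∑' _ : {x : X // lvl x = k ∧ (vBall ξ lvl y ∩ vBall ξ lvl x).Nonempty}, 1) *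
            (μ (vBall ξ lvl y) * g y ^ P) := by rw [← ENNReal.tsum_mul_right, one_mul]
      _ ≤ _ := mul_le_mul_left (hμ.tsum_one_le_of_level_le hsep (by grind)) _
  calc levelSum μ ξ lvl P k (layerOp μ ξ lvl j g)
      ≤ ∑' x : {x : X // lvl x = k}, c * ∑' y : layer ξ lvl x j, μ (vBall ξ lvl y) * g y ^ P :=
        ENNReal.tsum_le_tsum fun x => hpt x
    _ ≤ c * ∑' y : {y : X // lvl y = k + j}, ENNReal.ofReal (C * 18 ^ Q) *
          (μ (vBall ξ lvl y) * g y ^ P) := by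
        rw [ENNReal.tsum_mul_left, tsum_level_tsum_layer k j fun _ y => μ (vBall ξ lvl y) * g y ^ P]
        exact mul_le_mul_right (ENNReal.tsum_le_tsum hcount) c
    _ = c * ENNReal.ofReal (C * 18 ^ Q) * levelSum μ ξ lvl P (k + j) g := by
        rw [ENNReal.tsum_mul_left, levelSum, mul_assoc]

theorem measure_mul_layerOp_rpow_le_of_one_le (hμ : IsDoubling μ C Q)
    (hsep : LevelSeparated ξ lvl) {P : ℝ} (hP : 1 ≤ P) (j : ℕ) (g : X → ℝ≥0∞) (x : X) :
    μ (vBall ξ lvl x) * layerOp μ ξ lvl j g x ^ P ≤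
      (ENNReal.ofReal (C * 4 ^ Q) * ENNReal.ofReal (C * 3 ^ Q)) ^ (P - 1) *
        ∑' y : layer ξ lvl x j, μ (vBall ξ lvl y) * g y ^ P := by
  set w : layer ξ lvl x j → ℝ≥0∞ := fun y => μ (vBall ξ lvl y) / μ (vBall ξ lvl x)
  have hcancel : μ (vBall ξ lvl x) * ∑' y, w y * g y ^ P =
      ∑' y : layer ξ lvl x j, μ (vBall ξ lvl y) * g y ^ P := by
    rw [← ENNReal.tsum_mul_left]
    refine tsum_congr fun y => ?_
    rw [← mul_assoc, ENNReal.mul_div_cancel (hμ.measure_vBall_pos x).ne'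
      (hμ.measure_vBall_lt_top x).ne]
  calc μ (vBall ξ lvl x) * layerOp μ ξ lvl j g x ^ P
      ≤ μ (vBall ξ lvl x) * ((∑' y, w y) ^ (P - 1) * ∑' y, w y * g y ^ P) :=
        mul_le_mul_right (ENNReal.rpow_tsum_mul_le w _ hP) _
    _ ≤ μ (vBall ξ lvl x) * ((ENNReal.ofReal (C * 4 ^ Q) * ENNReal.ofReal (C * 3 ^ Q)) ^ (P - 1) *
          ∑' y, w y * g y ^ P) := by
        gcongr
        exact hμ.tsum_div_measure_layer_le hsep x j
    _ = _ := by rw [mul_left_comm, hcancel]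

theorem iSup_layerOp_le (hμ : IsDoubling μ C Q) (hsep : LevelSeparated ξ lvl) (k : ℤ) (j : ℕ)
    (g : X → ℝ≥0∞) :
    ⨆ x : {x : X // lvl x = k}, layerOp μ ξ lvl j g x ≤
      ENNReal.ofReal (C * 4 ^ Q) * ENNReal.ofReal (C * 3 ^ Q) *
        ⨆ y : {y : X // lvl y = k + j}, g y := by
  refine iSup_le fun x => ?_
  calc layerOp μ ξ lvl j g x
      ≤ ∑' y : layer ξ lvl x j, μ (vBall ξ lvl y) / μ (vBall ξ lvl x) *
          ⨆ y : {y : X // lvl y = k + j}, g y := by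
        refine ENNReal.tsum_le_tsum fun y => mul_le_mul_right ?_ _
        exact le_iSup (fun y : {y : X // lvl y = k + j} => g y) ⟨y, by grind [layer]⟩
    _ ≤ _ := by
        rw [ENNReal.tsum_mul_right]
        exact mul_le_mul_left (hμ.tsum_div_measure_layer_le hsep x j) _

end IsDoubling

end LevelEstimates

section Weighted

variable {Z X : Type*} [MetricSpace Z] [MeasurableSpace Z] {μ : Measure Z} {C Q : ℝ}
  {ξ : X → Z} {lvl : X → ℤ}

def weightedLevelSum (μ : Measure Z) (ξ : X → Z) (lvl : X → ℤ) (s P : ℝ) (g : X → ℝ≥0∞)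
    (k : ℤ) : ℝ≥0∞ :=
  2 ^ ((k:ℝ) * (s * P)) * levelSum μ ξ lvl P k g

def weightedLevelSup (lvl : X → ℤ) (s : ℝ) (g : X → ℝ≥0∞) (k : ℤ) : ℝ≥0∞ :=
  2 ^ ((k:ℝ) * s) * ⨆ x : {x : X // lvl x = k}, g x

theorem levelSum_avgOp_le_tsum {P : ℝ} (hP0 : 0 < P) (hP1 : P ≤ 1) (k : ℤ) (g : X → ℝ≥0∞) :
    levelSum μ ξ lvl P k (avgOp μ ξ lvl g) ≤ ∑' j, levelSum μ ξ lvl P k (layerOp μ ξ lvl j g) := by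
  simp only [levelSum]
  rw [ENNReal.tsum_comm]
  refine ENNReal.tsum_le_tsum fun x => ?_
  rw [ENNReal.tsum_mul_left, avgOp_eq_tsum_layerOp]
  exact mul_le_mul_right (ENNReal.rpow_tsum_le_tsum_rpow _ hP0 hP1) _

theorem levelSum_le_of_forall_rpow_le {P : ℝ} {k : ℤ} {f : X → ℝ≥0∞} {h : ℕ → X → ℝ≥0∞}
    {A : ℝ≥0∞} {a : ℕ → ℝ≥0∞} (hf : ∀ x, f x ^ P ≤ A * ∑' j, a j * h j x ^ P) :
    levelSum μ ξ lvl P k f ≤ A * ∑' j, a j * levelSum μ ξ lvl P k (h j) := by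
  calc levelSum μ ξ lvl P k f
      ≤ ∑' x : {x : X // lvl x = k}, μ (vBall ξ lvl x) * (A * ∑' j, a j * h j x ^ P) :=
        ENNReal.tsum_le_tsum fun x => mul_le_mul_right (hf x) _
    _ = A * ∑' j, a j * levelSum μ ξ lvl P k (h j) := by
        simp only [levelSum, ← ENNReal.tsum_mul_left]
        rw [ENNReal.tsum_comm]
        exact tsum_congr fun j => tsum_congr fun x => by ring

theorem iSup_avgOp_le_tsum (k : ℤ) (g : X → ℝ≥0∞) :
    ⨆ x : {x : X // lvl x = k}, avgOp μ ξ lvl g x ≤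
      ∑' j, ⨆ x : {x : X // lvl x = k}, layerOp μ ξ lvl j g x := by
  refine iSup_le fun x => ?_
  rw [avgOp_eq_tsum_layerOp]
  exact ENNReal.tsum_le_tsum fun j =>
    le_iSup (fun x : {x : X // lvl x = k} => layerOp μ ξ lvl j g x) x

variable [OpensMeasurableSpace Z]

theorem exists_weightedLevelSum_avgOp_le_of_le_one (hμ : IsDoubling μ C Q)
    (hsep : LevelSeparated ξ lvl) {s P : ℝ} (hP0 : 0 < P) (hP1 : P ≤ 1)
    (hPQ : Q < P * (Q + s)) :
    ∃ c t : ℝ≥0∞, c ≠ ∞ ∧ t < 1 ∧ ∀ g k, weightedLevelSum μ ξ lvl s P (avgOp μ ξ lvl g) k ≤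
      ∑' j : ℕ, c * t ^ j * weightedLevelSum μ ξ lvl s P g (k + j) := by
  refine ⟨ENNReal.ofReal (C * 4 ^ Q) ^ (1 - P) * ENNReal.ofReal (C * 18 ^ Q),
    2 ^ (Q * (1 - P)) * 2 ^ (-(s * P)),
    mul_ne_top (rpow_ne_top_of_nonneg (by linarith) ofReal_ne_top) ofReal_ne_top, ?_,
    fun g k => ?_⟩
  · rw [← ENNReal.rpow_add _ _ two_ne_zero ofNat_ne_top]
    exact rpow_lt_one_of_one_lt_of_neg one_lt_two (by nlinarith)
  rw [weightedLevelSum]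
  refine (mul_le_mul_right (levelSum_avgOp_le_tsum hP0 hP1 k g) _).trans ?_
  rw [← ENNReal.tsum_mul_left]
  refine ENNReal.tsum_le_tsum fun j => ?_
  refine (mul_le_mul_right (hμ.levelSum_layerOp_le hsep
    (hμ.measure_mul_layerOp_rpow_le_of_le_one hP0 hP1 j g)) _).trans_eq ?_
  rw [ENNReal.two_rpow_intCast_mul_eq _ k j, weightedLevelSum, mul_rpow_of_nonneg _ _ (by linarith),
    ← ENNReal.rpow_mul, mul_right_comm Q, ENNReal.rpow_mul_natCast, mul_pow]
  ring

theorem exists_weightedLevelSum_avgOp_le_of_one_le (hμ : IsDoubling μ C Q)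
    (hsep : LevelSeparated ξ lvl) {s P : ℝ} (hs : 0 < s) (hP : 1 ≤ P) :
    ∃ c t : ℝ≥0∞, c ≠ ∞ ∧ t < 1 ∧ ∀ g k, weightedLevelSum μ ξ lvl s P (avgOp μ ξ lvl g) k ≤
      ∑' j : ℕ, c * t ^ j * weightedLevelSum μ ξ lvl s P g (k + j) := by
  set ρ : ℝ≥0∞ := 2 ^ (-(s / 2))
  set ρ' : ℝ≥0∞ := 2 ^ (s / 2)
  have hG : ∑' j : ℕ, ρ ^ j ≠ ∞ := by
    rw [ENNReal.tsum_geometric]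
    exact inv_ne_top.2 (tsub_pos_of_lt
      (ENNReal.rpow_lt_one_of_one_lt_of_neg one_lt_two (by linarith))).ne'
  set G := ∑' j : ℕ, ρ ^ j
  set K := ENNReal.ofReal (C * 4 ^ Q) * ENNReal.ofReal (C * 3 ^ Q)
  refine ⟨G ^ (P - 1) * (K ^ (P - 1) * ENNReal.ofReal (C * 18 ^ Q)),
    ρ * ρ' ^ P * 2 ^ (-(s * P)), mul_ne_top (rpow_ne_top_of_nonneg (by linarith) hG)
      (mul_ne_top (rpow_ne_top_of_nonneg (by linarith) (mul_ne_top ofReal_ne_top ofReal_ne_top))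
        ofReal_ne_top), ?_, fun g k => ?_⟩
  · rw [← ENNReal.rpow_mul, ← ENNReal.rpow_add _ _ two_ne_zero ofNat_ne_top,
      ← ENNReal.rpow_add _ _ two_ne_zero ofNat_ne_top]
    exact ENNReal.rpow_lt_one_of_one_lt_of_neg one_lt_two (by nlinarith)
  -- Hölder against the weights `ρ ^ j` costs only the factor `ρ' ^ (j P)` on the `j`-th layer.
  have hpt : ∀ x, avgOp μ ξ lvl g x ^ P ≤
      G ^ (P - 1) * ∑' j : ℕ, (ρ * ρ' ^ P) ^ j * layerOp μ ξ lvl j g x ^ P := by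
    intro x
    have hρρ' : ∀ j : ℕ, ρ ^ j * (ρ' ^ j * layerOp μ ξ lvl j g x) = layerOp μ ξ lvl j g x := by
      intro j
      rw [← mul_assoc, ← mul_pow, ← ENNReal.rpow_add _ _ two_ne_zero ofNat_ne_top,
        neg_add_cancel, ENNReal.rpow_zero, one_pow, one_mul]
    calc avgOp μ ξ lvl g x ^ P
        = (∑' j : ℕ, ρ ^ j * (ρ' ^ j * layerOp μ ξ lvl j g x)) ^ P := by
          simp only [hρρ', avgOp_eq_tsum_layerOp]
      _ ≤ _ := (ENNReal.rpow_tsum_mul_le _ _ hP).trans_eq <| by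
          simp only [mul_rpow_of_nonneg _ _ (zero_le_one.trans hP), pow_rpow_comm, mul_pow,
            mul_assoc]
          rfl
  calc weightedLevelSum μ ξ lvl s P (avgOp μ ξ lvl g) k
      ≤ 2 ^ ((k:ℝ) * (s * P)) * (G ^ (P - 1) *
          ∑' j : ℕ, (ρ * ρ' ^ P) ^ j * levelSum μ ξ lvl P k (layerOp μ ξ lvl j g)) :=
        mul_le_mul_right (levelSum_le_of_forall_rpow_le hpt) _
    _ ≤ 2 ^ ((k:ℝ) * (s * P)) * (G ^ (P - 1) * ∑' j : ℕ, (ρ * ρ' ^ P) ^ j *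
          (K ^ (P - 1) * ENNReal.ofReal (C * 18 ^ Q) * levelSum μ ξ lvl P (k + j) g)) := by
        gcongr with j
        exact hμ.levelSum_layerOp_le hsep (hμ.measure_mul_layerOp_rpow_le_of_one_le hsep hP j g)
    _ = _ := by
        rw [← ENNReal.tsum_mul_left, ← ENNReal.tsum_mul_left]
        refine tsum_congr fun j => ?_
        rw [ENNReal.two_rpow_intCast_mul_eq _ k j, weightedLevelSum, mul_pow, mul_pow]
        ring

theorem weightedLevelSup_avgOp_le (hμ : IsDoubling μ C Q) (hsep : LevelSeparated ξ lvl) (s : ℝ)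
    (g : X → ℝ≥0∞) (k : ℤ) :
    weightedLevelSup lvl s (avgOp μ ξ lvl g) k ≤
      ∑' j : ℕ, ENNReal.ofReal (C * 4 ^ Q) * ENNReal.ofReal (C * 3 ^ Q) * (2 ^ (-s)) ^ j *
        weightedLevelSup lvl s g (k + j) :=
  calc weightedLevelSup lvl s (avgOp μ ξ lvl g) k
      ≤ 2 ^ ((k:ℝ) * s) * ∑' j : ℕ, ENNReal.ofReal (C * 4 ^ Q) * ENNReal.ofReal (C * 3 ^ Q) *
          ⨆ y : {y : X // lvl y = k + j}, g y :=
        mul_le_mul_right ((iSup_avgOp_le_tsum k g).trans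
          (ENNReal.tsum_le_tsum fun j => hμ.iSup_layerOp_le hsep k j g)) _
    _ = _ := by
        rw [← ENNReal.tsum_mul_left]
        refine tsum_congr fun j => ?_
        rw [ENNReal.two_rpow_intCast_mul_eq _ k j, weightedLevelSup]
        ring

end Weighted

section SeqNorm

variable {Z X : Type*} [MetricSpace Z] [MeasurableSpace Z] {μ : Measure Z} {ξ : X → Z}
  {lvl : X → ℤ} {s : ℝ} {p q : ℝ≥0∞}

theorem seqNorm_mono {g g' : X → ℝ≥0∞} (h : ∀ x, g x ≤ g' x) :
    seqNorm μ ξ lvl s p q g ≤ seqNorm μ ξ lvl s p q g' :=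
  sumPartG_mono _ _ fun k =>
    mul_le_mul_right (sumPartG_mono _ _ fun x : {x : X // lvl x = k} => h x) _

theorem seqNorm_top (g : X → ℝ≥0∞) :
    seqNorm μ ξ lvl s ∞ q g = sumPartG q (fun _ => 1) (weightedLevelSup lvl s g) := by
  simp only [seqNorm, sumPartG, if_true, weightedLevelSup]

theorem seqNorm_eq_rpow (hp0 : p ≠ 0) (hp : p ≠ ∞) (hq0 : q ≠ 0) (g : X → ℝ≥0∞) :
    seqNorm μ ξ lvl s p q g =
      sumPartG (q / p) (fun _ => 1) (weightedLevelSum μ ξ lvl s p.toReal g) ^ (1 / p.toReal) := by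
  have hP : 0 < p.toReal := toReal_pos hp0 hp
  rw [← sumPartG_const_one_rpow hp0 hp hq0, seqNorm]
  congr 1
  ext k
  have hexp : (k:ℝ) * (s * p.toReal) * (1 / p.toReal) = k * s := by field_simp
  rw [weightedLevelSum, mul_rpow_of_nonneg _ _ (by positivity), ← ENNReal.rpow_mul, hexp,
    sumPartG, if_neg hp]
  rfl

theorem lt_top_of_seqNorm_lt_top (hp0 : p ≠ 0) (hq0 : q ≠ 0) {g : X → ℝ≥0∞}
    (hg : seqNorm μ ξ lvl s p q g < ∞) {x : X} (hx : μ (vBall ξ lvl x) ≠ 0) : g x < ∞ := by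
  by_contra! hgx
  have hlevel : sumPartG p (fun y : {y : X // lvl y = lvl x} => μ (vBall ξ lvl y))
      (fun y => g y) = ∞ := sumPartG_eq_top hp0 (i := ⟨x, rfl⟩) hx (top_le_iff.1 hgx)
  have hle := le_sumPartG_const_one hq0 (fun k : ℤ => 2 ^ ((k:ℝ) * s) *
    sumPartG p (fun x : {x : X // lvl x = k} => μ (vBall ξ lvl x)) (fun x => g x)) (lvl x)
  rw [hlevel, mul_top (by positivity)] at hle
  exact hg.ne (top_le_iff.1 hle)

end SeqNorm

theorem exists_seqNorm_avgOp_le {Z X : Type*} [MetricSpace Z] [MeasurableSpace Z]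
    [OpensMeasurableSpace Z] {μ : Measure Z} {C Q : ℝ} {ξ : X → Z} {lvl : X → ℤ}
    (hμ : IsDoubling μ C Q) (hsep : LevelSeparated ξ lvl) (hQ : 0 < Q) {s : ℝ} (hs : 0 < s)
    {p q : ℝ≥0∞} (hp : ENNReal.ofReal (Q / (Q + s)) < p) (hq : q ≠ 0) :
    ∃ K : ℝ≥0∞, K ≠ ∞ ∧ ∀ g : X → ℝ≥0∞,
      seqNorm μ ξ lvl s p q (avgOp μ ξ lvl g) ≤ K * seqNorm μ ξ lvl s p q g := by
  by_cases hp_top : p = ∞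
  · subst hp_top
    obtain ⟨K, hK, hconv⟩ := exists_sumPartG_le_of_le_tsum_shift hq
      (mul_ne_top ofReal_ne_top ofReal_ne_top)
      (ENNReal.rpow_lt_one_of_one_lt_of_neg one_lt_two (neg_neg_of_pos hs))
    exact ⟨K, hK, fun g => by
      simpa only [seqNorm_top] using hconv _ _ (weightedLevelSup_avgOp_le hμ hsep s g)⟩
  have hp0 : p ≠ 0 := (zero_le.trans_lt hp).ne'
  have hP : 0 < p.toReal := toReal_pos hp0 hp_top
  have hPQ : Q < p.toReal * (Q + s) := by
    rw [← div_lt_iff₀ (by linarith)]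
    exact (ofReal_lt_iff_lt_toReal (by positivity) hp_top).1 hp
  obtain ⟨c, t, hc, ht, hW⟩ := (le_total p.toReal 1).elim
    (fun h => exists_weightedLevelSum_avgOp_le_of_le_one hμ hsep hP h hPQ)
    (fun h => exists_weightedLevelSum_avgOp_le_of_one_le hμ hsep hs h)
  obtain ⟨K, hK, hconv⟩ := exists_sumPartG_le_of_le_tsum_shift
    (ENNReal.div_ne_zero.2 ⟨hq, hp_top⟩) hc ht
  refine ⟨K ^ (1 / p.toReal), rpow_ne_top_of_nonneg (by positivity) hK, fun g => ?_⟩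
  rw [seqNorm_eq_rpow hp0 hp_top hq, seqNorm_eq_rpow hp0 hp_top hq,
    ← mul_rpow_of_nonneg _ _ (by positivity)]
  exact rpow_le_rpow (hconv _ _ (hW g)) (by positivity)

theorem statement9_general {Z : Type*} [MetricSpace Z] [MeasurableSpace Z] [BorelSpace Z]
    (μ : Measure Z) (C Q : ℝ) (hQ : 0 < Q)
    (hdoub : ∀ (ζ : Z) (r lam : ℝ), 0 < r → 1 ≤ lam →
      μ (Metric.ball ζ (lam * r)) ≤ ENNReal.ofReal (C * lam ^ Q) * μ (Metric.ball ζ r))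
    (hpos : ∀ (ζ : Z) (r : ℝ), 0 < r → 0 < μ (Metric.ball ζ r))
    (hfin : ∀ (ζ : Z) (r : ℝ), μ (Metric.ball ζ r) < ∞)
    {X : Type*} (ξ : X → Z) (lvl : X → ℤ)
    (hsep : ∀ x y : X, x ≠ y → lvl x = lvl y → (2:ℝ) ^ (-lvl x - 1) ≤ dist (ξ x) (ξ y))
    (s : ℝ) (hs : 0 < s) (p q : ℝ≥0∞)
    (hp : ENNReal.ofReal (Q / (Q + s)) < p) (hq : 0 < q) :
    ∃ Cb : ℝ≥0∞, Cb ≠ ∞ ∧ ∀ u : X → ℂ,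
      seqNorm μ ξ lvl s p q (fun x => (‖u x‖₊ : ℝ≥0∞)) < ∞ →
      (∀ x : X, Summable (fun y : {y : X // lvl x ≤ lvl y ∧ (vBall ξ lvl y ∩ vBall ξ lvl x).Nonempty} =>
        ((μ (vBall ξ lvl y.1)).toReal / (μ (vBall ξ lvl x)).toReal) • u y.1)) ∧
      seqNorm μ ξ lvl s p q (fun x =>
          (‖∑' y : {y : X // lvl x ≤ lvl y ∧ (vBall ξ lvl y ∩ vBall ξ lvl x).Nonempty},
            ((μ (vBall ξ lvl y.1)).toReal / (μ (vBall ξ lvl x)).toReal) • u y.1‖₊ : ℝ≥0∞)) ≤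
        Cb * seqNorm μ ξ lvl s p q (fun x => (‖u x‖₊ : ℝ≥0∞)) := by
  have hμ : IsDoubling μ C Q := ⟨hdoub, hpos, hfin⟩
  obtain ⟨K, hK, hT⟩ := exists_seqNorm_avgOp_le hμ hsep hQ hs hp hq.ne'
  refine ⟨K, hK, fun u hu => ?_⟩
  set g : X → ℝ≥0∞ := fun x => ‖u x‖₊
  have hTg : ∀ x, avgOp μ ξ lvl g x ≠ ∞ := fun x =>
    (lt_top_of_seqNorm_lt_top (zero_le.trans_lt hp).ne' hq.ne'
      ((hT g).trans_lt (mul_lt_top hK.lt_top hu)) (hμ.measure_vBall_pos x).ne').ne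
  have henorm : ∀ x (y : {y : X // lvl x ≤ lvl y ∧ (vBall ξ lvl y ∩ vBall ξ lvl x).Nonempty}),
      ‖((μ (vBall ξ lvl y.1)).toReal / (μ (vBall ξ lvl x)).toReal) • u y.1‖ₑ =
        μ (vBall ξ lvl y) / μ (vBall ξ lvl x) * g y := fun x y => by
    rw [enorm_smul, Real.enorm_of_nonneg (by positivity), ← ENNReal.ofReal_toReal
      (div_ne_top (hμ.measure_vBall_lt_top y.1).ne (hμ.measure_vBall_pos x).ne'), toReal_div]
    rfl
  have hsum : ∀ x, ∑' y : {y : X // lvl x ≤ lvl y ∧ (vBall ξ lvl y ∩ vBall ξ lvl x).Nonempty},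
      ‖((μ (vBall ξ lvl y.1)).toReal / (μ (vBall ξ lvl x)).toReal) • u y.1‖ₑ ≠ ∞ := fun x => by
    rw [tsum_congr (henorm x)]
    exact hTg x
  refine ⟨fun x => Summable.of_enorm (hsum x), (seqNorm_mono fun x => ?_).trans (hT g)⟩
  exact enorm_tsum_le_tsum_enorm.trans_eq (tsum_congr (henorm x))

/-- the averaging operator
`Tu(x) = Σ_{|y| ≥ |x|, B(y)∩B(x)≠∅} (μ(B(y))/μ(B(x))) u(y)` is well defined and bounded
on `I^s_{p,q}(X)`. -/
theorem statement9 {Z : Type*} [MetricSpace Z] [MeasurableSpace Z] [BorelSpace Z]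
    (μ : Measure Z) (C Q : ℝ) (hC : 1 ≤ C) (hQ : 0 < Q)
    (hdoub : ∀ (ζ : Z) (r lam : ℝ), 0 < r → 1 ≤ lam →
      μ (Metric.ball ζ (lam * r)) ≤ ENNReal.ofReal (C * lam ^ Q) * μ (Metric.ball ζ r))
    (hpos : ∀ (ζ : Z) (r : ℝ), 0 < r → 0 < μ (Metric.ball ζ r))
    (hfin : ∀ (ζ : Z) (r : ℝ), μ (Metric.ball ζ r) < ∞)
    {X : Type*} (ξ : X → Z) (lvl : X → ℤ)
    (hsep : ∀ x y : X, x ≠ y → lvl x = lvl y → (2:ℝ) ^ (-lvl x - 1) ≤ dist (ξ x) (ξ y))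
    (hmax : ∀ (n : ℤ) (z : Z), ∃ x : X, lvl x = n ∧ dist z (ξ x) < (2:ℝ) ^ (-n - 1))
    (s : ℝ) (hs : 0 < s) (p q : ℝ≥0∞)
    (hp : ENNReal.ofReal (Q / (Q + s)) < p) (hq : 0 < q) :
    ∃ Cb : ℝ≥0∞, Cb ≠ ∞ ∧ ∀ u : X → ℂ,
      seqNorm μ ξ lvl s p q (fun x => (‖u x‖₊ : ℝ≥0∞)) < ∞ →
      (∀ x : X, Summable (fun y : {y : X // lvl x ≤ lvl y ∧ (vBall ξ lvl y ∩ vBall ξ lvl x).Nonempty} =>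
        ((μ (vBall ξ lvl y.1)).toReal / (μ (vBall ξ lvl x)).toReal) • u y.1)) ∧
      seqNorm μ ξ lvl s p q (fun x =>
          (‖∑' y : {y : X // lvl x ≤ lvl y ∧ (vBall ξ lvl y ∩ vBall ξ lvl x).Nonempty},
            ((μ (vBall ξ lvl y.1)).toReal / (μ (vBall ξ lvl x)).toReal) • u y.1‖₊ : ℝ≥0∞)) ≤
        Cb * seqNorm μ ξ lvl s p q (fun x => (‖u x‖₊ : ℝ≥0∞)) :=
  statement9_general μ C Q hQ hdoub hpos hfin ξ lvl hsep s hs p q hp hq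
end
end

section
/- Let 0 < s < ∞, Q/(Q+s) < p ≤ ∞ and 0 < q ≤ ∞. If u ∈ I^s_{p,q}(X), then TR u := lim_{n→∞} Σ_{x∈X_n} u(x)ψ_x = 0 μ-almost everywhere on Z. -/
open MeasureTheory Metric Filter ENNReal NNReal

noncomputable section

/-! ### Auxiliary lemmas -/

lemma two_rpow_ne_top' (a : ℝ) : (2:ℝ≥0∞) ^ a ≠ ⊤ := by
  rcases le_or_gt 0 a with h | h
  · exact ENNReal.rpow_ne_top_of_nonneg h (by norm_num)
  · have : (2:ℝ≥0∞) ^ a ≤ (2:ℝ≥0∞) ^ (0:ℝ) :=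
      ENNReal.rpow_le_rpow_of_exponent_le (by norm_num) h.le
    rw [ENNReal.rpow_zero] at this
    exact ne_top_of_le_ne_top one_ne_top this

lemma two_rpow_toReal (a : ℝ) : ((2:ℝ≥0∞) ^ a).toReal = (2:ℝ) ^ a := by
  rw [← ENNReal.toReal_rpow]; norm_num

/-- Each entry of an `ℓ^q`-type sum with unit weights is dominated by the whole sum. -/
lemma sumPartG_le_self (q : ℝ≥0∞) (hq : 0 < q) (f : ℤ → ℝ≥0∞) (k : ℤ) :
    f k ≤ sumPartG q (fun _ : ℤ => 1) f := by
  rcases eq_or_ne q ∞ with h | h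
  · simp only [sumPartG, if_pos h]
    exact le_iSup f k
  · have hqr : 0 < q.toReal := ENNReal.toReal_pos hq.ne' h
    simp only [sumPartG, if_neg h, one_mul]
    have h1 : f k ^ q.toReal ≤ ∑' j, f j ^ q.toReal :=
      ENNReal.le_tsum (f := fun j => f j ^ q.toReal) k
    calc f k = (f k ^ q.toReal) ^ (1/q.toReal) := by
          rw [← ENNReal.rpow_mul, mul_one_div_cancel hqr.ne', ENNReal.rpow_one]
      _ ≤ (∑' j, f j ^ q.toReal) ^ (1/q.toReal) :=
          ENNReal.rpow_le_rpow h1 (by positivity)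

lemma cancel_two_rpow_le {a : ℝ} {A S : ℝ≥0∞} (h : (2:ℝ≥0∞) ^ a * A ≤ S) :
    A ≤ (2:ℝ≥0∞) ^ (-a) * S := by
  have e : (2:ℝ≥0∞) ^ (-a) * ((2:ℝ≥0∞) ^ a * A) = A := by
    rw [← mul_assoc, ← ENNReal.rpow_add _ _ (by norm_num) (by norm_num),
      neg_add_cancel, ENNReal.rpow_zero, one_mul]
  calc A = (2:ℝ≥0∞) ^ (-a) * ((2:ℝ≥0∞) ^ a * A) := e.symm
    _ ≤ (2:ℝ≥0∞) ^ (-a) * S := mul_le_mul_right h _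

/-- Each level of the hyperbolic filling is countable. -/
lemma lvl_countable {Z X : Type*} [MetricSpace Z] [MeasurableSpace Z] [BorelSpace Z]
    (μ : Measure Z)
    (hpos : ∀ (ζ : Z) (r : ℝ), 0 < r → 0 < μ (Metric.ball ζ r))
    (hfin : ∀ (ζ : Z) (r : ℝ), μ (Metric.ball ζ r) < ∞)
    (ξ : X → Z) (lvl : X → ℤ)
    (hsep : ∀ x y : X, x ≠ y → lvl x = lvl y → (2:ℝ) ^ (-lvl x - 1) ≤ dist (ξ x) (ξ y))
    (n : ℤ) : Countable {x : X // lvl x = n} := by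
  rcases isEmpty_or_nonempty X with hX | ⟨⟨x₀⟩⟩
  · infer_instance
  set z₀ := ξ x₀ with hz₀
  set r : ℝ := (2:ℝ) ^ (-n-2) with hrdef
  have hr : 0 < r := zpow_pos (by norm_num) _
  have hsep' : ∀ x y : {x : X // lvl x = n}, x ≠ y → r + r ≤ dist (ξ x.1) (ξ y.1) := by
    intro x y hxy
    have h1 := hsep x.1 y.1 (fun h => hxy (Subtype.ext h)) (by rw [x.2, y.2])
    rw [x.2] at h1
    have h2 : r + r = (2:ℝ) ^ (-n-1) := by
      rw [hrdef, ← two_mul, show (-n-1 : ℤ) = 1 + (-n-2) by ring,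
        zpow_add₀ (two_ne_zero), zpow_one]
    linarith
  have key : ∀ m : ℕ, {x : {x : X // lvl x = n} | dist (ξ x.1) z₀ < m}.Countable := by
    intro m
    have hcnt := MeasureTheory.Measure.countable_meas_pos_of_disjoint_of_meas_iUnion_ne_top μ
      (As := fun x : {x : X // lvl x = n} => Metric.ball (ξ x.1) r ∩ Metric.ball z₀ (m + r))
      (fun x => measurableSet_ball.inter measurableSet_ball)
      (fun x y hxy => (ball_disjoint_ball (hsep' x y hxy)).mono
        Set.inter_subset_left Set.inter_subset_left)
      (by
        refine (lt_of_le_of_lt (measure_mono ?_) (hfin z₀ (m + r))).ne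
        exact Set.iUnion_subset fun x => Set.inter_subset_right)
    refine hcnt.mono ?_
    intro x hx
    have hxd : dist (ξ x.1) z₀ < m := hx
    have hsub : Metric.ball (ξ x.1) r ⊆ Metric.ball z₀ (m + r) := by
      intro w hw
      have ht := dist_triangle w (ξ x.1) z₀
      simp only [Metric.mem_ball] at hw ⊢
      linarith
    have heq : Metric.ball (ξ x.1) r ∩ Metric.ball z₀ (m + r) = Metric.ball (ξ x.1) r :=
      Set.inter_eq_self_of_subset_left hsub
    simp only [Set.mem_setOf_eq, heq]
    exact hpos _ _ hr
  have huniv : (Set.univ : Set {x : X // lvl x = n}).Countable := by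
    refine (Set.countable_iUnion key).mono ?_
    intro x _
    obtain ⟨m, hm⟩ := exists_nat_gt (dist (ξ x.1) z₀)
    exact Set.mem_iUnion.2 ⟨m, hm⟩
  exact Set.countable_univ_iff.mp huniv

/-- If for some fixed `ε > 0`, `c ≥ 0` and all sufficiently deep levels `k` one has
`‖u x‖ ≤ c * 2^{-kε}` whenever `z` is in the ball of `x`, then `T_n u (z) → 0`. -/
lemma tendsto_discConv_of_tail {Z X : Type*} [MetricSpace Z]
    (ξ : X → Z) (lvl : X → ℤ) (ψ : X → Z → ℝ)
    (hψ0 : ∀ x z, 0 ≤ ψ x z)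
    (hψsupp : ∀ x, Function.support (ψ x) ⊆ vBall ξ lvl x)
    (hψpart : ∀ (n : ℤ) (z : Z), ∑' x : {x : X // lvl x = n}, ψ x.1 z = 1)
    (u : X → ℂ) (z : Z) (ε c : ℝ) (hε : 0 < ε) (hc : 0 ≤ c) (N : ℤ)
    (h : ∀ k : ℤ, N ≤ k → ∀ x : X, lvl x = k → z ∈ vBall ξ lvl x →
      ‖u x‖ ≤ c * (2:ℝ) ^ (-(k:ℝ) * ε)) :
    Filter.Tendsto (fun n : ℤ => discConv lvl ψ u n z) Filter.atTop (nhds 0) := by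
  set b : ℝ := (2:ℝ) ^ (-ε) with hbdef
  have hb0 : 0 ≤ b := Real.rpow_nonneg (by norm_num) _
  have hb1 : b < 1 := Real.rpow_lt_one_of_one_lt_of_neg one_lt_two (neg_neg_of_pos hε)
  have htoNat : Tendsto Int.toNat atTop atTop :=
    tendsto_atTop_atTop.2 fun m => ⟨(m : ℤ), fun a ha => by omega⟩
  have hgeo : Tendsto (fun m : ℕ => c * b ^ m) atTop (nhds 0) := by
    simpa using (tendsto_pow_atTop_nhds_zero_of_lt_one hb0 hb1).const_mul c
  have hg : Tendsto (fun k : ℤ => c * b ^ k.toNat) atTop (nhds 0) := hgeo.comp htoNat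
  refine squeeze_zero_norm' ?_ hg
  filter_upwards [eventually_ge_atTop (max N 0)] with k hk
  have hkN : N ≤ k := le_trans (le_max_left _ _) hk
  have hk0 : (0:ℤ) ≤ k := le_trans (le_max_right _ _) hk
  have hbk : c * (2:ℝ) ^ (-(k:ℝ) * ε) = c * b ^ k.toNat := by
    congr 1
    rw [hbdef, ← Real.rpow_natCast ((2:ℝ) ^ (-ε)) k.toNat, ← Real.rpow_mul (by norm_num)]
    congr 1
    have hcast : ((k.toNat : ℕ) : ℝ) = (k : ℝ) := by
      exact_mod_cast congrArg Int.cast (Int.toNat_of_nonneg hk0)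
    rw [hcast]; ring
  rw [← hbk]
  set M := c * (2:ℝ) ^ (-(k:ℝ) * ε) with hM
  have hψs : Summable (fun x : {x : X // lvl x = k} => ψ x.1 z) := by
    by_contra hcon
    have h1 := hψpart k z
    rw [tsum_eq_zero_of_not_summable hcon] at h1
    norm_num at h1
  have hbd : ∀ x : {x : X // lvl x = k}, ‖(ψ x.1 z : ℂ) * u x.1‖ ≤ ψ x.1 z * M := by
    intro x
    rcases eq_or_ne (ψ x.1 z) 0 with h0 | h0
    · simp [h0]
    · have hz : z ∈ vBall ξ lvl x.1 := hψsupp x.1 (Function.mem_support.2 h0)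
      have hb := h k hkN x.1 x.2 hz
      rw [norm_mul, Complex.norm_real, Real.norm_eq_abs, abs_of_nonneg (hψ0 x.1 z)]
      exact mul_le_mul_of_nonneg_left hb (hψ0 x.1 z)
  have hsum2 : Summable fun x : {x : X // lvl x = k} => ψ x.1 z * M := hψs.mul_right M
  have hle := tsum_of_norm_bounded hsum2.hasSum hbd
  calc ‖discConv lvl ψ u k z‖
      ≤ ∑' x : {x : X // lvl x = k}, ψ x.1 z * M := hle
    _ = (∑' x : {x : X // lvl x = k}, ψ x.1 z) * M := tsum_mul_right
    _ = M := by rw [hψpart k z, one_mul]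

/-- if `u ∈ I^s_{p,q}(X)` then `TR u = lim_n T_n u = 0` μ-a.e. -/
theorem statement11 {Z : Type*} [MetricSpace Z] [MeasurableSpace Z] [BorelSpace Z]
    (μ : Measure Z) (C Q : ℝ) (hC : 1 ≤ C) (hQ : 0 < Q)
    (hdoub : ∀ (ζ : Z) (r lam : ℝ), 0 < r → 1 ≤ lam →
      μ (Metric.ball ζ (lam * r)) ≤ ENNReal.ofReal (C * lam ^ Q) * μ (Metric.ball ζ r))
    (hpos : ∀ (ζ : Z) (r : ℝ), 0 < r → 0 < μ (Metric.ball ζ r))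
    (hfin : ∀ (ζ : Z) (r : ℝ), μ (Metric.ball ζ r) < ∞)
    {X : Type*} (ξ : X → Z) (lvl : X → ℤ)
    (hsep : ∀ x y : X, x ≠ y → lvl x = lvl y → (2:ℝ) ^ (-lvl x - 1) ≤ dist (ξ x) (ξ y))
    (hmax : ∀ (n : ℤ) (z : Z), ∃ x : X, lvl x = n ∧ dist z (ξ x) < (2:ℝ) ^ (-n - 1))
    (ψ : X → Z → ℝ) (hψ0 : ∀ x z, 0 ≤ ψ x z)
    (hψsupp : ∀ x, Function.support (ψ x) ⊆ vBall ξ lvl x)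
    (hψpart : ∀ (n : ℤ) (z : Z), ∑' x : {x : X // lvl x = n}, ψ x.1 z = 1)
    (K : ℝ≥0) (hψlip : ∀ x, LipschitzWith (K * (2:ℝ≥0) ^ (lvl x)) (ψ x))
    (s : ℝ) (hs : 0 < s) (p q : ℝ≥0∞)
    (hp : ENNReal.ofReal (Q / (Q + s)) < p) (hq : 0 < q)
    (u : X → ℂ) (hu : seqNorm μ ξ lvl s p q (fun x => (‖u x‖₊ : ℝ≥0∞)) < ∞) :
    ∀ᵐ z ∂μ, Filter.Tendsto (fun n : ℤ => discConv lvl ψ u n z) Filter.atTop (nhds 0) := by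
  have hcnt : ∀ n : ℤ, Countable {x : X // lvl x = n} :=
    lvl_countable μ hpos hfin ξ lvl hsep
  have hp0 : p ≠ 0 := by
    have h0 : (0:ℝ≥0∞) < ENNReal.ofReal (Q / (Q + s)) :=
      ENNReal.ofReal_pos.2 (div_pos hQ (by linarith))
    exact (lt_trans h0 hp).ne'
  -- the per-level bound coming from `hu`
  have hFk : ∀ k : ℤ, (2:ℝ≥0∞) ^ ((k:ℝ) * s) *
      sumPartG p (fun x : {x : X // lvl x = k} => μ (vBall ξ lvl x.1))
        (fun x => (‖u x.1‖₊ : ℝ≥0∞)) ≤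
      seqNorm μ ξ lvl s p q (fun x => (‖u x‖₊ : ℝ≥0∞)) := by
    intro k
    exact sumPartG_le_self q hq
      (fun k => (2:ℝ≥0∞) ^ ((k:ℝ) * s) *
        sumPartG p (fun x : {x : X // lvl x = k} => μ (vBall ξ lvl x.1))
          (fun x => (‖u x.1‖₊ : ℝ≥0∞))) k
  set S := seqNorm μ ξ lvl s p q (fun x => (‖u x‖₊ : ℝ≥0∞)) with hSdef
  have hA2 : ∀ k : ℤ,
      sumPartG p (fun x : {x : X // lvl x = k} => μ (vBall ξ lvl x.1))
        (fun x => (‖u x.1‖₊ : ℝ≥0∞)) ≤ (2:ℝ≥0∞) ^ (-((k:ℝ) * s)) * S :=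
    fun k => cancel_two_rpow_le (hFk k)
  rcases eq_or_ne p ∞ with hp' | hp'
  · -- the case `p = ∞`: a uniform geometric bound, valid at every point
    have hbnd : ∀ k : ℤ, ∀ x : X, lvl x = k →
        (‖u x‖₊ : ℝ≥0∞) ≤ (2:ℝ≥0∞) ^ (-((k:ℝ) * s)) * S := by
      intro k x hx
      refine le_trans ?_ (hA2 k)
      simp only [sumPartG, if_pos hp']
      exact le_iSup (fun y : {x : X // lvl x = k} => (‖u y.1‖₊ : ℝ≥0∞)) ⟨x, hx⟩
    refine Filter.Eventually.of_forall ?_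
    intro z
    refine tendsto_discConv_of_tail ξ lvl ψ hψ0 hψsupp hψpart u z s S.toReal hs
      ENNReal.toReal_nonneg 0 ?_
    intro k _ x hx _
    have h1 := hbnd k x hx
    have hfin2 : (2:ℝ≥0∞) ^ (-((k:ℝ) * s)) * S ≠ ⊤ :=
      ENNReal.mul_ne_top (two_rpow_ne_top' _) hu.ne
    calc ‖u x‖ = ((‖u x‖₊ : ℝ≥0∞)).toReal := by simp
      _ ≤ ((2:ℝ≥0∞) ^ (-((k:ℝ) * s)) * S).toReal := ENNReal.toReal_mono hfin2 h1
      _ = S.toReal * (2:ℝ) ^ (-(k:ℝ) * s) := by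
          rw [ENNReal.toReal_mul, mul_comm, two_rpow_toReal, neg_mul]
  · -- the case `p < ∞`: Borel–Cantelli
    have hpr : 0 < p.toReal := ENNReal.toReal_pos hp0 hp'
    set pr := p.toReal with hprdef
    have hsum_k : ∀ k : ℤ,
        (∑' x : {x : X // lvl x = k}, μ (vBall ξ lvl x.1) * (‖u x.1‖₊ : ℝ≥0∞) ^ pr)
          ≤ ((2:ℝ≥0∞) ^ (-((k:ℝ) * s)) * S) ^ pr := by
      intro k
      have h2 := hA2 k
      simp only [sumPartG, if_neg hp'] at h2
      have h3 := ENNReal.rpow_le_rpow h2 hpr.le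
      rwa [← ENNReal.rpow_mul, one_div_mul_cancel hpr.ne', ENNReal.rpow_one] at h3
    set ε := s/2 with hεdef
    have hε : 0 < ε := half_pos hs
    set E : ℕ → Set Z := fun m =>
      ⋃ x : {x : X // lvl x = (m:ℤ)},
        (if (2:ℝ≥0∞) ^ (-(m:ℝ) * ε) ≤ (‖u x.1‖₊ : ℝ≥0∞) then vBall ξ lvl x.1 else ∅)
      with hEdef
    have hEm : ∀ m : ℕ,
        μ (E m) ≤ (2:ℝ≥0∞) ^ (-((m:ℝ) * ((s - ε) * pr))) * S ^ pr := by
      intro m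
      haveI := hcnt (m:ℤ)
      have step1 : μ (E m) ≤ ∑' x : {x : X // lvl x = (m:ℤ)},
          μ (if (2:ℝ≥0∞) ^ (-(m:ℝ) * ε) ≤ (‖u x.1‖₊ : ℝ≥0∞) then vBall ξ lvl x.1 else ∅) :=
        measure_iUnion_le _
      have step2 : ∀ x : {x : X // lvl x = (m:ℤ)},
          μ (if (2:ℝ≥0∞) ^ (-(m:ℝ) * ε) ≤ (‖u x.1‖₊ : ℝ≥0∞) then vBall ξ lvl x.1 else ∅)
            ≤ (2:ℝ≥0∞) ^ ((m:ℝ) * ε * pr) *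
              (μ (vBall ξ lvl x.1) * (‖u x.1‖₊ : ℝ≥0∞) ^ pr) := by
        intro x
        by_cases hcond : (2:ℝ≥0∞) ^ (-(m:ℝ) * ε) ≤ (‖u x.1‖₊ : ℝ≥0∞)
        · rw [if_pos hcond]
          have h4 : (2:ℝ≥0∞) ^ ((-(m:ℝ) * ε) * pr) ≤ (‖u x.1‖₊ : ℝ≥0∞) ^ pr := by
            have h5 := ENNReal.rpow_le_rpow hcond hpr.le
            rwa [← ENNReal.rpow_mul] at h5
          have key : (2:ℝ≥0∞) ^ ((m:ℝ) * ε * pr) *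
              (μ (vBall ξ lvl x.1) * (2:ℝ≥0∞) ^ ((-(m:ℝ) * ε) * pr)) = μ (vBall ξ lvl x.1) := by
            rw [mul_comm (μ (vBall ξ lvl x.1)), ← mul_assoc,
              ← ENNReal.rpow_add _ _ (by norm_num) (by norm_num),
              show ((m:ℝ) * ε * pr + (-(m:ℝ) * ε) * pr) = 0 by ring,
              ENNReal.rpow_zero, one_mul]
          calc μ (vBall ξ lvl x.1) = _ := key.symm
            _ ≤ (2:ℝ≥0∞) ^ ((m:ℝ) * ε * pr) *
                (μ (vBall ξ lvl x.1) * (‖u x.1‖₊ : ℝ≥0∞) ^ pr) :=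
              mul_le_mul_right (mul_le_mul_right h4 _) _
        · rw [if_neg hcond]; simp
      have step3 : μ (E m) ≤ (2:ℝ≥0∞) ^ ((m:ℝ) * ε * pr) *
          ((2:ℝ≥0∞) ^ (-((m:ℝ) * s)) * S) ^ pr := by
        calc μ (E m) ≤ _ := step1
          _ ≤ ∑' x : {x : X // lvl x = (m:ℤ)}, (2:ℝ≥0∞) ^ ((m:ℝ) * ε * pr) *
              (μ (vBall ξ lvl x.1) * (‖u x.1‖₊ : ℝ≥0∞) ^ pr) := ENNReal.tsum_le_tsum step2
          _ = (2:ℝ≥0∞) ^ ((m:ℝ) * ε * pr) *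
              ∑' x : {x : X // lvl x = (m:ℤ)},
                μ (vBall ξ lvl x.1) * (‖u x.1‖₊ : ℝ≥0∞) ^ pr := ENNReal.tsum_mul_left
          _ ≤ _ := mul_le_mul_right (hsum_k (m:ℤ)) _
      refine step3.trans (le_of_eq ?_)
      rw [ENNReal.mul_rpow_of_nonneg _ _ hpr.le, ← ENNReal.rpow_mul, ← mul_assoc,
        ← ENNReal.rpow_add _ _ (by norm_num) (by norm_num),
        show ((m:ℝ) * ε * pr + (-((m:ℝ) * s)) * pr) = -((m:ℝ) * ((s - ε) * pr)) by ring]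
    set r : ℝ≥0∞ := (2:ℝ≥0∞) ^ (-((s - ε) * pr)) with hrdef
    have hr1 : r < 1 := by
      have h6 : (-((s - ε) * pr)) < 0 := by
        have : 0 < (s - ε) * pr := mul_pos (by rw [hεdef]; linarith) hpr
        linarith
      calc r < (2:ℝ≥0∞) ^ (0:ℝ) :=
          ENNReal.rpow_lt_rpow_of_exponent_lt (by norm_num) (by norm_num) h6
        _ = 1 := ENNReal.rpow_zero
    have hterm : ∀ m : ℕ, (2:ℝ≥0∞) ^ (-((m:ℝ) * ((s - ε) * pr))) = r ^ m := by
      intro m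
      rw [hrdef, ← ENNReal.rpow_natCast ((2:ℝ≥0∞) ^ (-((s - ε) * pr))) m, ← ENNReal.rpow_mul]
      congr 1; ring
    have hsumE : (∑' m : ℕ, μ (E m)) ≠ ∞ := by
      have hle : (∑' m : ℕ, μ (E m)) ≤ ∑' m : ℕ, r ^ m * S ^ pr := by
        refine ENNReal.tsum_le_tsum fun m => ?_
        rw [← hterm m]
        exact hEm m
      have heq : (∑' m : ℕ, r ^ m * S ^ pr) = (1 - r)⁻¹ * S ^ pr := by
        rw [ENNReal.tsum_mul_right, ENNReal.tsum_geometric]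
      refine ne_top_of_le_ne_top ?_ hle
      rw [heq]
      refine ENNReal.mul_ne_top ?_ (ENNReal.rpow_ne_top_of_nonneg hpr.le hu.ne)
      exact ENNReal.inv_ne_top.2 (tsub_pos_of_lt hr1).ne'
    filter_upwards [MeasureTheory.ae_eventually_notMem hsumE] with z hz
    obtain ⟨N, hN⟩ := eventually_atTop.1 hz
    refine tendsto_discConv_of_tail ξ lvl ψ hψ0 hψsupp hψpart u z ε 1 hε zero_le_one (N:ℤ) ?_
    intro k hk x hx hzx
    have hk0 : (0:ℤ) ≤ k := le_trans (Int.natCast_nonneg N) hk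
    set m := k.toNat with hmdef
    have hmk : (m : ℤ) = k := Int.toNat_of_nonneg hk0
    have hmN : N ≤ m := by omega
    have hzE : z ∉ ⋃ x : {x : X // lvl x = (m:ℤ)},
        (if (2:ℝ≥0∞) ^ (-(m:ℝ) * ε) ≤ (‖u x.1‖₊ : ℝ≥0∞) then vBall ξ lvl x.1 else ∅) :=
      hN m hmN
    have hxm : lvl x = (m:ℤ) := by rw [hmk]; exact hx
    have h5 : z ∉ (if (2:ℝ≥0∞) ^ (-(m:ℝ) * ε) ≤ (‖u x‖₊ : ℝ≥0∞) then vBall ξ lvl x else ∅) :=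
      fun hmem => hzE (Set.mem_iUnion.2 ⟨⟨x, hxm⟩, hmem⟩)
    have h6 : ¬ ((2:ℝ≥0∞) ^ (-(m:ℝ) * ε) ≤ (‖u x‖₊ : ℝ≥0∞)) := by
      intro hc
      rw [if_pos hc] at h5
      exact h5 hzx
    have h7 : (‖u x‖₊ : ℝ≥0∞) ≤ (2:ℝ≥0∞) ^ (-(k:ℝ) * ε) := by
      have hcast : ((m:ℝ)) = (k:ℝ) := by exact_mod_cast hmk
      rw [show (-(k:ℝ) * ε) = (-(m:ℝ) * ε) by rw [hcast]]
      exact (not_le.1 h6).le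
    rw [one_mul]
    calc ‖u x‖ = ((‖u x‖₊ : ℝ≥0∞)).toReal := by simp
      _ ≤ ((2:ℝ≥0∞) ^ (-(k:ℝ) * ε)).toReal := ENNReal.toReal_mono (two_rpow_ne_top' _) h7
      _ = (2:ℝ) ^ (-(k:ℝ) * ε) := two_rpow_toReal _
end
end

section
/- Let 0 < s₀, s₁ < ∞, 0 < p₀, q₀, p₁, q₁ ≤ ∞ and 0 < θ < 1, and define 1/p = (1−θ)/p₀ + θ/p₁, 1/q = (1−θ)/q₀ + θ/q₁, s = (1−θ)s₀ + θs₁. Then the Calderón product satisfies (I^{s₀}_{p₀,q₀}(X))^{1−θ}(I^{s₁}_{p₁,q₁}(X))^{θ} = I^s_{p,q}(X) with equivalent quasinorms. -/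
open MeasureTheory Metric Filter ENNReal NNReal

noncomputable section

/-- The Calderón product quasinorm of `I^{s₀}_{p₀,q₀}(X)` and `I^{s₁}_{p₁,q₁}(X)`. -/
def calderonNorm {Z X : Type*} [MetricSpace Z] [MeasurableSpace Z] (μ : Measure Z)
    (ξ : X → Z) (lvl : X → ℤ) (s₀ : ℝ) (p₀ q₀ : ℝ≥0∞) (s₁ : ℝ) (p₁ q₁ : ℝ≥0∞) (θ : ℝ)
    (u : X → ℂ) : ℝ≥0∞ :=
  ⨅ lam : {lam : ℝ≥0∞ // ∃ u₀ u₁ : X → ℂ,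
      seqNorm μ ξ lvl s₀ p₀ q₀ (fun x => (‖u₀ x‖₊ : ℝ≥0∞)) ≤ 1 ∧
      seqNorm μ ξ lvl s₁ p₁ q₁ (fun x => (‖u₁ x‖₊ : ℝ≥0∞)) ≤ 1 ∧
      ∀ x, (‖u x‖₊ : ℝ≥0∞) ≤ lam * (‖u₀ x‖₊ : ℝ≥0∞) ^ (1 - θ) * (‖u₁ x‖₊ : ℝ≥0∞) ^ θ},
    lam.1

/-! Both inequalities hold with constant `1`. Hölder's inequality with exponents `p₀ / (1 - θ)`,
`p₁ / θ` on each level, and then with `q₀ / (1 - θ)`, `q₁ / θ` across levels, bounds the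
`I^s_{p,q}` norm of `u₀ ^ (1 - θ) * u₁ ^ θ` by `‖u₀‖ ^ (1 - θ) * ‖u₁‖ ^ θ`. Conversely, let `g`
have norm `N` and `ℓ^p` norm `A_k` on level `k`. Since `‖f ^ (p / p')‖_{p'} = ‖f‖_p ^ (p / p')`,
the sequence `Gᵢ = (g / A_k) ^ (p / pᵢ) * (2 ^ (k s) A_k / N) ^ (q / qᵢ) * 2 ^ (-k sᵢ)` has
`I^{sᵢ}_{pᵢ,qᵢ}` norm at most `1`, and the exponents are chosen so that
`G₀ ^ (1 - θ) * G₁ ^ θ = g / N`. -/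

namespace CalderonProduct

section WeightedSum

variable {ι : Type*} {p p' : ℝ≥0∞} {w f g : ι → ℝ≥0∞} {θ : ℝ} {p₀ p₁ : ℝ≥0∞}

lemma sumPartG_mono (h : ∀ i, f i ≤ g i) : sumPartG p w f ≤ sumPartG p w g := by
  unfold sumPartG
  split_ifs
  · exact iSup_mono h
  · gcongr with i
    exact h i

lemma sumPartG_const_mul (hp : p ≠ 0) (c : ℝ≥0∞) (f : ι → ℝ≥0∞) :
    sumPartG p w (fun i => c * f i) = c * sumPartG p w f := by
  unfold sumPartG
  split_ifs with hpt
  · exact (ENNReal.mul_iSup c f).symm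
  · have hp' : 0 < p.toReal := ENNReal.toReal_pos hp hpt
    simp_rw [ENNReal.mul_rpow_of_nonneg _ _ hp'.le, mul_left_comm (w _), ENNReal.tsum_mul_left,
      ENNReal.mul_rpow_of_nonneg _ _ (one_div_pos.2 hp').le, ← ENNReal.rpow_mul,
      mul_one_div_cancel hp'.ne', ENNReal.rpow_one]

lemma sumPartG_ne_zero (hp : p ≠ 0) {i : ι} (hw : w i ≠ 0) (hf : f i ≠ 0) :
    sumPartG p w f ≠ 0 := by
  unfold sumPartG
  split_ifs with hpt
  · exact (pos_iff_ne_zero.2 hf |>.trans_le (le_iSup f i)).ne'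
  · have hp' : 0 < p.toReal := ENNReal.toReal_pos hp hpt
    refine (ENNReal.rpow_pos_of_nonneg (pos_iff_ne_zero.2 fun h => ?_) (by positivity)).ne'
    exact mul_ne_zero hw (ENNReal.rpow_pos_of_nonneg (pos_iff_ne_zero.2 hf) hp'.le).ne'
      (ENNReal.tsum_eq_zero.1 h i)

lemma ne_top_of_sumPartG_ne_top (hp : p ≠ 0) {i : ι} (hw : w i ≠ 0) (h : sumPartG p w f ≠ ∞) :
    f i ≠ ∞ := by
  unfold sumPartG at h
  split_ifs at h with hpt
  · exact ne_top_of_le_ne_top h (le_iSup f i)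
  · have hp' : 0 < p.toReal := ENNReal.toReal_pos hp hpt
    rintro hfi
    refine h ?_
    have : ∑' j, w j * f j ^ p.toReal = ∞ :=
      top_le_iff.1 <| (ENNReal.le_tsum i).trans' <| by
        simp [hfi, ENNReal.top_rpow_of_pos hp', ENNReal.mul_top hw]
    rw [this, ENNReal.top_rpow_of_pos (one_div_pos.2 hp')]

lemma sumPartG_rpow {α : ℝ} (hα : 0 < α) (f : ι → ℝ≥0∞) :
    sumPartG p w (fun i => f i ^ α) = sumPartG (p * ENNReal.ofReal α) w f ^ α := by
  have hα' : ENNReal.ofReal α ≠ 0 := by simpa using hα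
  rcases eq_or_ne p ∞ with rfl | hpt
  · simp only [sumPartG, ENNReal.top_mul hα', if_true]
    exact ((ENNReal.orderIsoRpow α hα).map_iSup f).symm
  · have hpαt : p * ENNReal.ofReal α ≠ ∞ := ENNReal.mul_ne_top hpt ENNReal.ofReal_ne_top
    simp only [sumPartG, if_neg hpt, if_neg hpαt, ENNReal.toReal_mul,
      ENNReal.toReal_ofReal hα.le, ← ENNReal.rpow_mul]
    congr 1
    · simp_rw [mul_comm α]
    · field_simp

lemma sumPartG_mul_le_iSup_mul (hp : p ≠ 0) (f g : ι → ℝ≥0∞) :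
    sumPartG p w (fun i => f i * g i) ≤ (⨆ i, f i) * sumPartG p w g := by
  rw [← sumPartG_const_mul hp]
  exact sumPartG_mono fun i => mul_le_mul_left (le_iSup f i) _

lemma tsum_mul_eq_lintegral_withDensity [MeasurableSpace ι] [DiscreteMeasurableSpace ι]
    (w f : ι → ℝ≥0∞) : ∑' i, w i * f i = ∫⁻ i, f i ∂(Measure.count.withDensity w) := by
  rw [lintegral_withDensity_eq_lintegral_mul _ (.of_discrete) (.of_discrete), lintegral_count]
  rfl

lemma sumPartG_mul_le {r₀ r₁ r : ℝ≥0∞} (hr₀ : r₀ ≠ 0) (hr₁ : r₁ ≠ 0)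
    (hr : r₀⁻¹ + r₁⁻¹ = r⁻¹) (f g : ι → ℝ≥0∞) :
    sumPartG r w (fun i => f i * g i) ≤ sumPartG r₀ w f * sumPartG r₁ w g := by
  rcases eq_or_ne r₀ ∞ with rfl | hr₀t
  · obtain rfl : r₁ = r := by simpa using hr
    simpa [sumPartG] using sumPartG_mul_le_iSup_mul hr₁ f g
  rcases eq_or_ne r₁ ∞ with rfl | hr₁t
  · obtain rfl : r₀ = r := by simpa using hr
    simpa [sumPartG, hr₀t, mul_comm] using sumPartG_mul_le_iSup_mul (w := w) hr₀ g f
  let _ : MeasurableSpace ι := ⊤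
  have hr₀' : 0 < r₀.toReal := ENNReal.toReal_pos hr₀ hr₀t
  have hr₁' : 0 < r₁.toReal := ENNReal.toReal_pos hr₁ hr₁t
  have hrt : r ≠ ∞ := by
    intro h
    simp [h, hr₀t, hr₁t] at hr
  have hrR : 1 / r.toReal = 1 / r₀.toReal + 1 / r₁.toReal := by
    have := congrArg ENNReal.toReal hr
    rwa [ENNReal.toReal_add (by simpa using hr₀) (by simpa using hr₁),
      ENNReal.toReal_inv, ENNReal.toReal_inv, ENNReal.toReal_inv, ← one_div, ← one_div,
      ← one_div, eq_comm] at this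
  have hr' : 0 < r.toReal := by
    rw [← one_div_pos, hrR]; positivity
  have hlt : r.toReal < r₀.toReal := by
    rw [← one_div_lt_one_div hr₀' hr', hrR]; exact lt_add_of_pos_right _ (by positivity)
  simp only [sumPartG, if_neg hrt, if_neg hr₀t, if_neg hr₁t, tsum_mul_eq_lintegral_withDensity]
  exact ENNReal.lintegral_Lp_mul_le_Lq_mul_Lr hr' hlt hrR _ (.of_discrete) (.of_discrete)

lemma ne_zero_of_inv_eq_interp (hp₀ : p₀ ≠ 0) (hp₁ : p₁ ≠ 0)
    (hpθ : p⁻¹ = ENNReal.ofReal (1 - θ) * p₀⁻¹ + ENNReal.ofReal θ * p₁⁻¹) : p ≠ 0 := by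
  rintro rfl
  rw [ENNReal.inv_zero] at hpθ
  exact ENNReal.add_ne_top.2 ⟨ENNReal.mul_ne_top ENNReal.ofReal_ne_top (by simpa using hp₀),
    ENNReal.mul_ne_top ENNReal.ofReal_ne_top (by simpa using hp₁)⟩ hpθ.symm

lemma eq_top_of_inv_eq_interp (hθ : 0 < θ) (hθ1 : θ < 1)
    (hpθ : p⁻¹ = ENNReal.ofReal (1 - θ) * p₀⁻¹ + ENNReal.ofReal θ * p₁⁻¹) (hp : p = ∞) :
    p₀ = ∞ ∧ p₁ = ∞ := by
  obtain ⟨h₀, h₁⟩ : (1 ≤ θ ∨ p₀ = ∞) ∧ (θ ≤ 0 ∨ p₁ = ∞) := by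
    simpa [hp, eq_comm (a := (0 : ℝ≥0∞))] using hpθ
  exact ⟨h₀.resolve_left (by linarith), h₁.resolve_left (by linarith)⟩

lemma inv_div_add_inv_div_eq_inv (hθ : 0 < θ) (hθ1 : θ < 1)
    (hpθ : p⁻¹ = ENNReal.ofReal (1 - θ) * p₀⁻¹ + ENNReal.ofReal θ * p₁⁻¹) :
    (p₀ / ENNReal.ofReal (1 - θ))⁻¹ + (p₁ / ENNReal.ofReal θ)⁻¹ = p⁻¹ := by
  rw [ENNReal.inv_div (.inl ENNReal.ofReal_ne_top) (.inl (by simpa using hθ1)),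
    ENNReal.inv_div (.inl ENNReal.ofReal_ne_top) (.inl (by simpa using hθ)),
    div_eq_mul_inv, div_eq_mul_inv, hpθ]

lemma sumPartG_rpow_mul_rpow_le (hθ : 0 < θ) (hθ1 : θ < 1) (hp₀ : p₀ ≠ 0) (hp₁ : p₁ ≠ 0)
    (hpθ : p⁻¹ = ENNReal.ofReal (1 - θ) * p₀⁻¹ + ENNReal.ofReal θ * p₁⁻¹)
    (f g : ι → ℝ≥0∞) :
    sumPartG p w (fun i => f i ^ (1 - θ) * g i ^ θ) ≤
      sumPartG p₀ w f ^ (1 - θ) * sumPartG p₁ w g ^ θ := by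
  have hθ' : ENNReal.ofReal θ ≠ 0 := by simpa using hθ
  have hθ1' : ENNReal.ofReal (1 - θ) ≠ 0 := by simpa using hθ1
  calc sumPartG p w (fun i => f i ^ (1 - θ) * g i ^ θ)
      ≤ sumPartG (p₀ / ENNReal.ofReal (1 - θ)) w (fun i => f i ^ (1 - θ)) *
          sumPartG (p₁ / ENNReal.ofReal θ) w (fun i => g i ^ θ) :=
        sumPartG_mul_le (by simpa using hp₀) (by simpa using hp₁)
          (inv_div_add_inv_div_eq_inv hθ hθ1 hpθ) _ _
    _ = sumPartG p₀ w f ^ (1 - θ) * sumPartG p₁ w g ^ θ := by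
        rw [sumPartG_rpow (by linarith), sumPartG_rpow hθ,
          ENNReal.div_mul_cancel hθ1' ENNReal.ofReal_ne_top,
          ENNReal.div_mul_cancel hθ' ENNReal.ofReal_ne_top]

/-- The exponent `p / p'`, except that `∞ / ∞` is taken to be `1`. -/
def expRatio (p p' : ℝ≥0∞) : ℝ := if p = ∞ then 1 else (p / p').toReal

lemma expRatio_nonneg (p p' : ℝ≥0∞) : 0 ≤ expRatio p p' := by
  unfold expRatio; split_ifs <;> positivity

lemma expRatio_interp (hθ : 0 < θ) (hθ1 : θ < 1) (hp₀ : p₀ ≠ 0) (hp₁ : p₁ ≠ 0)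
    (hpθ : p⁻¹ = ENNReal.ofReal (1 - θ) * p₀⁻¹ + ENNReal.ofReal θ * p₁⁻¹) :
    (1 - θ) * expRatio p p₀ + θ * expRatio p p₁ = 1 := by
  unfold expRatio
  split_ifs with hpt
  · ring
  have hp := ne_zero_of_inv_eq_interp hp₀ hp₁ hpθ
  have hinv : (p⁻¹).toReal = (1 - θ) * (p₀⁻¹).toReal + θ * (p₁⁻¹).toReal := by
    rw [hpθ, ENNReal.toReal_add (by simp [ENNReal.mul_eq_top, hp₀])
      (by simp [ENNReal.mul_eq_top, hp₁]), ENNReal.toReal_mul, ENNReal.toReal_mul,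
      ENNReal.toReal_ofReal (by linarith), ENNReal.toReal_ofReal hθ.le]
  have hpp : p.toReal * (p⁻¹).toReal = 1 := by
    rw [ENNReal.toReal_inv, mul_inv_cancel₀ (ENNReal.toReal_pos hp hpt).ne']
  rw [hinv] at hpp
  rw [div_eq_mul_inv, div_eq_mul_inv, ENNReal.toReal_mul, ENNReal.toReal_mul]
  linear_combination hpp

lemma sumPartG_rpow_expRatio_le (hp : p ≠ 0) (hp' : p' ≠ 0) (hpp' : p = ∞ → p' = ∞)
    (f : ι → ℝ≥0∞) :
    sumPartG p' w (fun i => f i ^ expRatio p p') ≤ sumPartG p w f ^ expRatio p p' := by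
  rcases eq_or_ne p ∞ with hpt | hpt
  · simp [expRatio, hpt, hpp' hpt]
  rcases eq_or_ne p' ∞ with hp't | hp't
  · simp [expRatio, hpt, hp't, sumPartG]
  have hα : 0 < (p / p').toReal :=
    ENNReal.toReal_pos (by simpa [hp't] using hp) (ENNReal.div_ne_top hpt hp')
  rw [expRatio, if_neg hpt, sumPartG_rpow hα, ENNReal.ofReal_toReal (ENNReal.div_ne_top hpt hp'),
    ENNReal.mul_div_cancel hp' hp't]

lemma sumPartG_rpow_expRatio_div_le_one (hp : p ≠ 0) (hp' : p' ≠ 0) (hpp' : p = ∞ → p' = ∞)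
    (f : ι → ℝ≥0∞) :
    sumPartG p' w (fun i => (f i / sumPartG p w f) ^ expRatio p p') ≤ 1 := by
  calc sumPartG p' w (fun i => (f i / sumPartG p w f) ^ expRatio p p')
      ≤ sumPartG p w (fun i => f i / sumPartG p w f) ^ expRatio p p' :=
        sumPartG_rpow_expRatio_le hp hp' hpp' _
    _ = (sumPartG p w f / sumPartG p w f) ^ expRatio p p' := by
        simp_rw [div_eq_mul_inv, mul_comm _ (sumPartG p w f)⁻¹, sumPartG_const_mul hp]
    _ ≤ 1 := ENNReal.rpow_le_one ENNReal.div_self_le_one (expRatio_nonneg p p')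

end WeightedSum

lemma rpow_interp {x : ℝ≥0∞} (hx₀ : x ≠ 0) (hx : x ≠ ∞) (θ a b : ℝ) :
    (x ^ a) ^ (1 - θ) * (x ^ b) ^ θ = x ^ ((1 - θ) * a + θ * b) := by
  rw [← ENNReal.rpow_mul, ← ENNReal.rpow_mul, ← ENNReal.rpow_add _ _ hx₀ hx, mul_comm a,
    mul_comm b]

section SequenceSpace

variable {Z X : Type*} [MetricSpace Z] [MeasurableSpace Z] (μ : Measure Z) (ξ : X → Z)
  (lvl : X → ℤ)

def levelNorm (p : ℝ≥0∞) (g : X → ℝ≥0∞) (k : ℤ) : ℝ≥0∞ :=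
  sumPartG p (fun x : {x : X // lvl x = k} => μ (vBall ξ lvl x.1)) (fun x => g x.1)

lemma seqNorm_eq (s : ℝ) (p q : ℝ≥0∞) (g : X → ℝ≥0∞) :
    seqNorm μ ξ lvl s p q g =
      sumPartG q (fun _ => 1) (fun k : ℤ => 2 ^ ((k : ℝ) * s) * levelNorm μ ξ lvl p g k) :=
  rfl

variable {μ ξ lvl} {s : ℝ} {p q : ℝ≥0∞}

lemma seqNorm_mono {f g : X → ℝ≥0∞} (h : ∀ x, f x ≤ g x) :
    seqNorm μ ξ lvl s p q f ≤ seqNorm μ ξ lvl s p q g :=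
  sumPartG_mono fun _ => mul_le_mul_right (sumPartG_mono fun (x : {x // lvl x = _}) => h x.1) _

lemma seqNorm_const_mul (hp : p ≠ 0) (hq : q ≠ 0) (c : ℝ≥0∞) (f : X → ℝ≥0∞) :
    seqNorm μ ξ lvl s p q (fun x => c * f x) = c * seqNorm μ ξ lvl s p q f := by
  simp only [seqNorm_eq, levelNorm, sumPartG_const_mul hp, mul_left_comm _ c,
    sumPartG_const_mul hq]

lemma seqNorm_rpow_mul_rpow_le {θ : ℝ} (hθ : 0 < θ) (hθ1 : θ < 1) {s₀ s₁ : ℝ}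
    {p₀ q₀ p₁ q₁ : ℝ≥0∞} (hp₀ : p₀ ≠ 0) (hq₀ : q₀ ≠ 0) (hp₁ : p₁ ≠ 0) (hq₁ : q₁ ≠ 0)
    (hsθ : s = (1 - θ) * s₀ + θ * s₁)
    (hpθ : p⁻¹ = ENNReal.ofReal (1 - θ) * p₀⁻¹ + ENNReal.ofReal θ * p₁⁻¹)
    (hqθ : q⁻¹ = ENNReal.ofReal (1 - θ) * q₀⁻¹ + ENNReal.ofReal θ * q₁⁻¹)
    (f g : X → ℝ≥0∞) :
    seqNorm μ ξ lvl s p q (fun x => f x ^ (1 - θ) * g x ^ θ) ≤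
      seqNorm μ ξ lvl s₀ p₀ q₀ f ^ (1 - θ) * seqNorm μ ξ lvl s₁ p₁ q₁ g ^ θ := by
  refine (sumPartG_mono fun k => ?_).trans (sumPartG_rpow_mul_rpow_le hθ hθ1 hq₀ hq₁ hqθ _ _)
  have h2 : (2 : ℝ≥0∞) ^ ((k : ℝ) * s) =
      (2 ^ ((k : ℝ) * s₀)) ^ (1 - θ) * (2 ^ ((k : ℝ) * s₁)) ^ θ := by
    rw [rpow_interp two_ne_zero ENNReal.ofNat_ne_top, hsθ]
    ring_nf
  calc 2 ^ ((k : ℝ) * s) * levelNorm μ ξ lvl p (fun x => f x ^ (1 - θ) * g x ^ θ) k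
      ≤ 2 ^ ((k : ℝ) * s) *
          (levelNorm μ ξ lvl p₀ f k ^ (1 - θ) * levelNorm μ ξ lvl p₁ g k ^ θ) :=
        mul_le_mul_right (sumPartG_rpow_mul_rpow_le hθ hθ1 hp₀ hp₁ hpθ _ _) _
    _ = (2 ^ ((k : ℝ) * s₀) * levelNorm μ ξ lvl p₀ f k) ^ (1 - θ) *
          (2 ^ ((k : ℝ) * s₁) * levelNorm μ ξ lvl p₁ g k) ^ θ := by
        rw [h2, ENNReal.mul_rpow_of_nonneg _ _ (by linarith),
          ENNReal.mul_rpow_of_nonneg _ _ hθ.le]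
        ring

lemma ne_top_of_seqNorm_ne_top (hw : ∀ x, μ (vBall ξ lvl x) ≠ 0) (hp : p ≠ 0) (hq : q ≠ 0)
    {g : X → ℝ≥0∞} (h : seqNorm μ ξ lvl s p q g ≠ ∞) (x : X) : g x ≠ ∞ := by
  have hlevel : 2 ^ ((lvl x : ℝ) * s) * levelNorm μ ξ lvl p g (lvl x) ≠ ∞ :=
    ne_top_of_sumPartG_ne_top (f := fun k : ℤ => 2 ^ ((k : ℝ) * s) * levelNorm μ ξ lvl p g k)
      hq one_ne_zero h
  have : levelNorm μ ξ lvl p g (lvl x) ≠ ∞ := by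
    simpa [ENNReal.mul_eq_top] using hlevel
  exact ne_top_of_sumPartG_ne_top (i := ⟨x, rfl⟩) hp (hw x) this

variable (μ ξ lvl s p q) in
def calderonFactor (s' : ℝ) (p' q' : ℝ≥0∞) (g : X → ℝ≥0∞) (x : X) : ℝ≥0∞ :=
  (g x / levelNorm μ ξ lvl p g (lvl x)) ^ expRatio p p' *
    (2 ^ ((lvl x : ℝ) * s) * levelNorm μ ξ lvl p g (lvl x) / seqNorm μ ξ lvl s p q g) ^
      expRatio q q' *
    (2 ^ ((lvl x : ℝ) * s'))⁻¹

lemma seqNorm_calderonFactor_le_one (hp : p ≠ 0) (hq : q ≠ 0) {s' : ℝ} {p' q' : ℝ≥0∞}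
    (hp' : p' ≠ 0) (hq' : q' ≠ 0) (hpp' : p = ∞ → p' = ∞) (hqq' : q = ∞ → q' = ∞)
    (g : X → ℝ≥0∞) :
    seqNorm μ ξ lvl s' p' q' (calderonFactor μ ξ lvl s p q s' p' q' g) ≤ 1 := by
  set b : ℤ → ℝ≥0∞ := fun k => 2 ^ ((k : ℝ) * s) * levelNorm μ ξ lvl p g k
  have hlevel : ∀ k : ℤ, 2 ^ ((k : ℝ) * s') *
      levelNorm μ ξ lvl p' (calderonFactor μ ξ lvl s p q s' p' q' g) k ≤
        (b k / seqNorm μ ξ lvl s p q g) ^ expRatio q q' := by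
    intro k
    set c := (b k / seqNorm μ ξ lvl s p q g) ^ expRatio q q' * (2 ^ ((k : ℝ) * s'))⁻¹
    have hfactor : levelNorm μ ξ lvl p' (calderonFactor μ ξ lvl s p q s' p' q' g) k =
        c * sumPartG p' (fun x : {x : X // lvl x = k} => μ (vBall ξ lvl x.1))
          (fun x => (g x.1 / levelNorm μ ξ lvl p g k) ^ expRatio p p') := by
      rw [levelNorm, ← sumPartG_const_mul hp']
      congr 1
      funext x
      rw [calderonFactor, x.2]
      ring
    calc 2 ^ ((k : ℝ) * s') * levelNorm μ ξ lvl p' (calderonFactor μ ξ lvl s p q s' p' q' g) k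
        ≤ 2 ^ ((k : ℝ) * s') * (c * 1) := by
          rw [hfactor]
          gcongr
          exact sumPartG_rpow_expRatio_div_le_one hp hp' hpp' _
      _ = (b k / seqNorm μ ξ lvl s p q g) ^ expRatio q q' := by
          rw [mul_one, mul_left_comm, ENNReal.mul_inv_cancel (by simp) (by simp), mul_one]
  calc seqNorm μ ξ lvl s' p' q' (calderonFactor μ ξ lvl s p q s' p' q' g)
      ≤ sumPartG q' (fun _ => 1) (fun k => (b k / seqNorm μ ξ lvl s p q g) ^ expRatio q q') :=
        sumPartG_mono hlevel
    _ ≤ 1 := sumPartG_rpow_expRatio_div_le_one hq hq' hqq' b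

lemma calderonFactor_rpow_mul_rpow {θ : ℝ} (hθ : 0 < θ) (hθ1 : θ < 1) {s₀ s₁ : ℝ}
    {p₀ q₀ p₁ q₁ : ℝ≥0∞} (hp₀ : p₀ ≠ 0) (hq₀ : q₀ ≠ 0) (hp₁ : p₁ ≠ 0) (hq₁ : q₁ ≠ 0)
    (hsθ : s = (1 - θ) * s₀ + θ * s₁)
    (hpθ : p⁻¹ = ENNReal.ofReal (1 - θ) * p₀⁻¹ + ENNReal.ofReal θ * p₁⁻¹)
    (hqθ : q⁻¹ = ENNReal.ofReal (1 - θ) * q₀⁻¹ + ENNReal.ofReal θ * q₁⁻¹)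
    {g : X → ℝ≥0∞} {x : X} (hr₀ : g x / levelNorm μ ξ lvl p g (lvl x) ≠ 0)
    (hr : g x / levelNorm μ ξ lvl p g (lvl x) ≠ ∞)
    (ht₀ : 2 ^ ((lvl x : ℝ) * s) * levelNorm μ ξ lvl p g (lvl x) / seqNorm μ ξ lvl s p q g ≠ 0)
    (ht : 2 ^ ((lvl x : ℝ) * s) * levelNorm μ ξ lvl p g (lvl x) / seqNorm μ ξ lvl s p q g ≠ ∞) :
    calderonFactor μ ξ lvl s p q s₀ p₀ q₀ g x ^ (1 - θ) *
        calderonFactor μ ξ lvl s p q s₁ p₁ q₁ g x ^ θ =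
      g x / levelNorm μ ξ lvl p g (lvl x) *
        (2 ^ ((lvl x : ℝ) * s) * levelNorm μ ξ lvl p g (lvl x) / seqNorm μ ξ lvl s p q g) *
        (2 ^ ((lvl x : ℝ) * s))⁻¹ := by
  set r := g x / levelNorm μ ξ lvl p g (lvl x)
  set t := 2 ^ ((lvl x : ℝ) * s) * levelNorm μ ξ lvl p g (lvl x) / seqNorm μ ξ lvl s p q g
  simp only [calderonFactor, ← ENNReal.rpow_neg,
    ENNReal.mul_rpow_of_nonneg _ _ (sub_nonneg.2 hθ1.le), ENNReal.mul_rpow_of_nonneg _ _ hθ.le]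
  calc _ = (r ^ expRatio p p₀) ^ (1 - θ) * (r ^ expRatio p p₁) ^ θ *
        ((t ^ expRatio q q₀) ^ (1 - θ) * (t ^ expRatio q q₁) ^ θ) *
        (((2 : ℝ≥0∞) ^ (-((lvl x : ℝ) * s₀))) ^ (1 - θ) *
          ((2 : ℝ≥0∞) ^ (-((lvl x : ℝ) * s₁))) ^ θ) := by ring
    _ = r * t * 2 ^ (-((lvl x : ℝ) * s)) := by
      rw [rpow_interp hr₀ hr, rpow_interp ht₀ ht, rpow_interp two_ne_zero ENNReal.ofNat_ne_top,
        expRatio_interp hθ hθ1 hp₀ hp₁ hpθ, expRatio_interp hθ hθ1 hq₀ hq₁ hqθ,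
        ENNReal.rpow_one, ENNReal.rpow_one, hsθ]
      ring_nf

lemma le_mul_calderonFactor_rpow_mul_rpow (hw : ∀ x, μ (vBall ξ lvl x) ≠ 0)
    {θ : ℝ} (hθ : 0 < θ) (hθ1 : θ < 1) {s₀ s₁ : ℝ} {p₀ q₀ p₁ q₁ : ℝ≥0∞}
    (hp₀ : p₀ ≠ 0) (hq₀ : q₀ ≠ 0) (hp₁ : p₁ ≠ 0) (hq₁ : q₁ ≠ 0)
    (hsθ : s = (1 - θ) * s₀ + θ * s₁)
    (hpθ : p⁻¹ = ENNReal.ofReal (1 - θ) * p₀⁻¹ + ENNReal.ofReal θ * p₁⁻¹)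
    (hqθ : q⁻¹ = ENNReal.ofReal (1 - θ) * q₀⁻¹ + ENNReal.ofReal θ * q₁⁻¹)
    {g : X → ℝ≥0∞} (hN : seqNorm μ ξ lvl s p q g ≠ ∞) {x : X} (hgx : g x ≠ ∞) :
    g x ≤ seqNorm μ ξ lvl s p q g * calderonFactor μ ξ lvl s p q s₀ p₀ q₀ g x ^ (1 - θ) *
      calderonFactor μ ξ lvl s p q s₁ p₁ q₁ g x ^ θ := by
  rcases eq_or_ne (g x) 0 with hx | hx
  · simp [hx]
  have hp := ne_zero_of_inv_eq_interp hp₀ hp₁ hpθ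
  have hq := ne_zero_of_inv_eq_interp hq₀ hq₁ hqθ
  set N := seqNorm μ ξ lvl s p q g
  set A := levelNorm μ ξ lvl p g (lvl x)
  set y : ℝ≥0∞ := 2 ^ ((lvl x : ℝ) * s)
  have hy₀ : y ≠ 0 := by simp [y]
  have hy : y ≠ ∞ := by simp [y]
  have hA₀ : A ≠ 0 := sumPartG_ne_zero hp (i := ⟨x, rfl⟩) (hw x) hx
  have hyA : y * A ≠ ∞ :=
    ne_top_of_sumPartG_ne_top (f := fun k : ℤ => 2 ^ ((k : ℝ) * s) * levelNorm μ ξ lvl p g k)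
      hq one_ne_zero hN
  have hA : A ≠ ∞ := fun h => hyA (by simp [h, hy₀])
  have hN₀ : N ≠ 0 :=
    sumPartG_ne_zero (f := fun k : ℤ => 2 ^ ((k : ℝ) * s) * levelNorm μ ξ lvl p g k)
      hq (i := lvl x) one_ne_zero (mul_ne_zero hy₀ hA₀)
  rw [mul_assoc, calderonFactor_rpow_mul_rpow hθ hθ1 hp₀ hq₀ hp₁ hq₁ hsθ hpθ hqθ
    (ENNReal.div_ne_zero.2 ⟨hx, hA⟩) (ENNReal.div_ne_top hgx hA₀)
    (ENNReal.div_ne_zero.2 ⟨mul_ne_zero hy₀ hA₀, hN⟩) (ENNReal.div_ne_top hyA hN₀)]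
  refine le_of_eq ?_
  calc g x = g x * (A⁻¹ * A) * (y * y⁻¹) * (N⁻¹ * N) := by
        rw [ENNReal.inv_mul_cancel hA₀ hA, ENNReal.mul_inv_cancel hy₀ hy,
          ENNReal.inv_mul_cancel hN₀ hN, mul_one, mul_one, mul_one]
    _ = N * (g x / A * (y * A / N) * y⁻¹) := by
        rw [div_eq_mul_inv, div_eq_mul_inv]
        ring

lemma seqNorm_le_calderonNorm {θ : ℝ} (hθ : 0 < θ) (hθ1 : θ < 1) {s₀ s₁ : ℝ}
    {p₀ q₀ p₁ q₁ : ℝ≥0∞} (hp₀ : p₀ ≠ 0) (hq₀ : q₀ ≠ 0) (hp₁ : p₁ ≠ 0) (hq₁ : q₁ ≠ 0)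
    (hsθ : s = (1 - θ) * s₀ + θ * s₁)
    (hpθ : p⁻¹ = ENNReal.ofReal (1 - θ) * p₀⁻¹ + ENNReal.ofReal θ * p₁⁻¹)
    (hqθ : q⁻¹ = ENNReal.ofReal (1 - θ) * q₀⁻¹ + ENNReal.ofReal θ * q₁⁻¹) (u : X → ℂ) :
    seqNorm μ ξ lvl s p q (fun x => (‖u x‖₊ : ℝ≥0∞)) ≤
      calderonNorm μ ξ lvl s₀ p₀ q₀ s₁ p₁ q₁ θ u := by
  refine le_iInf fun ⟨c, u₀, u₁, hu₀, hu₁, hu⟩ => ?_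
  have hp := ne_zero_of_inv_eq_interp hp₀ hp₁ hpθ
  have hq := ne_zero_of_inv_eq_interp hq₀ hq₁ hqθ
  calc seqNorm μ ξ lvl s p q (fun x => (‖u x‖₊ : ℝ≥0∞))
      ≤ seqNorm μ ξ lvl s p q
          (fun x => c * ((‖u₀ x‖₊ : ℝ≥0∞) ^ (1 - θ) * (‖u₁ x‖₊ : ℝ≥0∞) ^ θ)) :=
        seqNorm_mono fun x => (hu x).trans_eq (mul_assoc _ _ _)
    _ ≤ c * (seqNorm μ ξ lvl s₀ p₀ q₀ (fun x => (‖u₀ x‖₊ : ℝ≥0∞)) ^ (1 - θ) *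
          seqNorm μ ξ lvl s₁ p₁ q₁ (fun x => (‖u₁ x‖₊ : ℝ≥0∞)) ^ θ) := by
        rw [seqNorm_const_mul hp hq]
        gcongr
        exact seqNorm_rpow_mul_rpow_le hθ hθ1 hp₀ hq₀ hp₁ hq₁ hsθ hpθ hqθ _ _
    _ ≤ c * (1 * 1) := by
        gcongr
        exacts [ENNReal.rpow_le_one hu₀ (by linarith), ENNReal.rpow_le_one hu₁ hθ.le]
    _ = c := by rw [mul_one, mul_one]

lemma calderonNorm_le_seqNorm (hw : ∀ x, μ (vBall ξ lvl x) ≠ 0) {θ : ℝ} (hθ : 0 < θ)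
    (hθ1 : θ < 1) {s₀ s₁ : ℝ} {p₀ q₀ p₁ q₁ : ℝ≥0∞}
    (hp₀ : p₀ ≠ 0) (hq₀ : q₀ ≠ 0) (hp₁ : p₁ ≠ 0) (hq₁ : q₁ ≠ 0)
    (hsθ : s = (1 - θ) * s₀ + θ * s₁)
    (hpθ : p⁻¹ = ENNReal.ofReal (1 - θ) * p₀⁻¹ + ENNReal.ofReal θ * p₁⁻¹)
    (hqθ : q⁻¹ = ENNReal.ofReal (1 - θ) * q₀⁻¹ + ENNReal.ofReal θ * q₁⁻¹) (u : X → ℂ) :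
    calderonNorm μ ξ lvl s₀ p₀ q₀ s₁ p₁ q₁ θ u ≤
      seqNorm μ ξ lvl s p q (fun x => (‖u x‖₊ : ℝ≥0∞)) := by
  set g : X → ℝ≥0∞ := fun x => ‖u x‖₊
  rcases eq_or_ne (seqNorm μ ξ lvl s p q g) ∞ with hN | hN
  · exact hN ▸ le_top
  have hp := ne_zero_of_inv_eq_interp hp₀ hp₁ hpθ
  have hq := ne_zero_of_inv_eq_interp hq₀ hq₁ hqθ
  set G₀ := calderonFactor μ ξ lvl s p q s₀ p₀ q₀ g
  set G₁ := calderonFactor μ ξ lvl s p q s₁ p₁ q₁ g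
  have hG₀ : seqNorm μ ξ lvl s₀ p₀ q₀ G₀ ≤ 1 :=
    seqNorm_calderonFactor_le_one hp hq hp₀ hq₀
      (fun h => (eq_top_of_inv_eq_interp hθ hθ1 hpθ h).1)
      (fun h => (eq_top_of_inv_eq_interp hθ hθ1 hqθ h).1) g
  have hG₁ : seqNorm μ ξ lvl s₁ p₁ q₁ G₁ ≤ 1 :=
    seqNorm_calderonFactor_le_one hp hq hp₁ hq₁
      (fun h => (eq_top_of_inv_eq_interp hθ hθ1 hpθ h).2)
      (fun h => (eq_top_of_inv_eq_interp hθ hθ1 hqθ h).2) g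
  have hnorm : ∀ {G : X → ℝ≥0∞} {s' : ℝ} {p' q' : ℝ≥0∞}, p' ≠ 0 → q' ≠ 0 →
      seqNorm μ ξ lvl s' p' q' G ≤ 1 → ∀ x, (‖(((G x).toReal : ℝ) : ℂ)‖₊ : ℝ≥0∞) = G x :=
    fun hp' hq' hG x => by
      rw [Complex.nnnorm_real, ← enorm_eq_nnnorm, Real.enorm_eq_ofReal ENNReal.toReal_nonneg,
        ENNReal.ofReal_toReal
          (ne_top_of_seqNorm_ne_top hw hp' hq' (ne_top_of_le_ne_top ENNReal.one_ne_top hG) x)]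
  refine iInf_le_of_le ⟨_, fun x => ((G₀ x).toReal : ℂ), fun x => ((G₁ x).toReal : ℂ),
    ?_, ?_, fun x => ?_⟩ le_rfl
  · simpa only [hnorm hp₀ hq₀ hG₀] using hG₀
  · simpa only [hnorm hp₁ hq₁ hG₁] using hG₁
  · rw [hnorm hp₀ hq₀ hG₀, hnorm hp₁ hq₁ hG₁]
    exact le_mul_calderonFactor_rpow_mul_rpow hw hθ hθ1 hp₀ hq₀ hp₁ hq₁ hsθ hpθ hqθ hN
      ENNReal.coe_ne_top

end SequenceSpace

end CalderonProduct

theorem statement18_general {Z : Type*} [MetricSpace Z] [MeasurableSpace Z]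
    (μ : Measure Z)
    (hpos : ∀ (ζ : Z) (r : ℝ), 0 < r → 0 < μ (Metric.ball ζ r))
    {X : Type*} (ξ : X → Z) (lvl : X → ℤ)
    (s₀ s₁ : ℝ)
    (p₀ q₀ p₁ q₁ : ℝ≥0∞) (hp₀ : 0 < p₀) (hq₀ : 0 < q₀) (hp₁ : 0 < p₁) (hq₁ : 0 < q₁)
    (θ : ℝ) (hθ : 0 < θ) (hθ1 : θ < 1)
    (s : ℝ) (p q : ℝ≥0∞)
    (hsθ : s = (1 - θ) * s₀ + θ * s₁)
    (hpθ : p⁻¹ = ENNReal.ofReal (1 - θ) * p₀⁻¹ + ENNReal.ofReal θ * p₁⁻¹)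
    (hqθ : q⁻¹ = ENNReal.ofReal (1 - θ) * q₀⁻¹ + ENNReal.ofReal θ * q₁⁻¹) :
    ∃ Cb : ℝ≥0∞, 1 ≤ Cb ∧ Cb ≠ ∞ ∧ ∀ u : X → ℂ,
      seqNorm μ ξ lvl s p q (fun x => (‖u x‖₊ : ℝ≥0∞)) ≤
        Cb * calderonNorm μ ξ lvl s₀ p₀ q₀ s₁ p₁ q₁ θ u ∧
      calderonNorm μ ξ lvl s₀ p₀ q₀ s₁ p₁ q₁ θ u ≤
        Cb * seqNorm μ ξ lvl s p q (fun x => (‖u x‖₊ : ℝ≥0∞)) := by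
  have hw : ∀ x, μ (vBall ξ lvl x) ≠ 0 := fun x => (hpos (ξ x) _ (by positivity)).ne'
  refine ⟨1, le_rfl, ENNReal.one_ne_top, fun u => ?_⟩
  simp only [one_mul]
  exact ⟨CalderonProduct.seqNorm_le_calderonNorm hθ hθ1 hp₀.ne' hq₀.ne' hp₁.ne' hq₁.ne' hsθ
      hpθ hqθ u,
    CalderonProduct.calderonNorm_le_seqNorm hw hθ hθ1 hp₀.ne' hq₀.ne' hp₁.ne' hq₁.ne' hsθ
      hpθ hqθ u⟩

/-- the Calderón product of `I^{s₀}_{p₀,q₀}(X)` and `I^{s₁}_{p₁,q₁}(X)` is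
`I^s_{p,q}(X)` with the interpolated parameters, with equivalent quasinorms. -/
theorem statement18 {Z : Type*} [MetricSpace Z] [MeasurableSpace Z] [BorelSpace Z]
    (μ : Measure Z)
    (hpos : ∀ (ζ : Z) (r : ℝ), 0 < r → 0 < μ (Metric.ball ζ r))
    (hfin : ∀ (ζ : Z) (r : ℝ), μ (Metric.ball ζ r) < ∞)
    {X : Type*} (ξ : X → Z) (lvl : X → ℤ)
    (hsep : ∀ x y : X, x ≠ y → lvl x = lvl y → (2:ℝ) ^ (-lvl x - 1) ≤ dist (ξ x) (ξ y))
    (hmax : ∀ (n : ℤ) (z : Z), ∃ x : X, lvl x = n ∧ dist z (ξ x) < (2:ℝ) ^ (-n - 1))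
    (s₀ s₁ : ℝ) (hs₀ : 0 < s₀) (hs₁ : 0 < s₁)
    (p₀ q₀ p₁ q₁ : ℝ≥0∞) (hp₀ : 0 < p₀) (hq₀ : 0 < q₀) (hp₁ : 0 < p₁) (hq₁ : 0 < q₁)
    (θ : ℝ) (hθ : 0 < θ) (hθ1 : θ < 1)
    (s : ℝ) (p q : ℝ≥0∞)
    (hsθ : s = (1 - θ) * s₀ + θ * s₁)
    (hpθ : p⁻¹ = ENNReal.ofReal (1 - θ) * p₀⁻¹ + ENNReal.ofReal θ * p₁⁻¹)
    (hqθ : q⁻¹ = ENNReal.ofReal (1 - θ) * q₀⁻¹ + ENNReal.ofReal θ * q₁⁻¹) :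
    ∃ Cb : ℝ≥0∞, 1 ≤ Cb ∧ Cb ≠ ∞ ∧ ∀ u : X → ℂ,
      seqNorm μ ξ lvl s p q (fun x => (‖u x‖₊ : ℝ≥0∞)) ≤
        Cb * calderonNorm μ ξ lvl s₀ p₀ q₀ s₁ p₁ q₁ θ u ∧
      calderonNorm μ ξ lvl s₀ p₀ q₀ s₁ p₁ q₁ θ u ≤
        Cb * seqNorm μ ξ lvl s p q (fun x => (‖u x‖₊ : ℝ≥0∞)) :=
  statement18_general μ hpos ξ lvl s₀ s₁ p₀ q₀ p₁ q₁ hp₀ hq₀ hp₁ hq₁ θ hθ hθ1 s p q hsθ hpθ hqθ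
end
end
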